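/- arXiv:math/0401215 — 6 statements merged into one kernel-verified Lean document; each statement's English description precedes it below -/
import Mathlib

section
/- Let M ≥ 2 be an integer and let β be a partition (possibly empty) with Σ(β) ≤ M − 2. Then ∑_{μ ∈ P(M−Σ(β))} (perm(μ)/|μ|!) · e_{β+μ} = 0. -/
open Finset

/-- `perm(α)`: the number of distinct ordered arrangements of the multiset `α`,
i.e. `|α|! / ∏_j m_j!` where `m_j` are the multiplicities of the distinct parts. -/
def permCount (s : Multiset ℕ) : ℕ :=
  (Multiset.card s).factorial / ∏ j ∈ s.toFinset, (s.count j).factorial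

/-- `e_α = (−1)^{Σ(α)+|α|} / (α_1⋯α_r)` for a partition (multiset) `α`;
for the empty multiset this is `1`. -/
noncomputable def eMul (s : Multiset ℕ) : ℝ :=
  (-1 : ℝ) ^ (s.sum + Multiset.card s) / (s.prod : ℝ)

noncomputable def Wgt (s : Multiset ℕ) : ℝ :=
  ∏ j ∈ s.toFinset, ((-1 / (j : ℝ)) ^ (s.count j) / ((s.count j).factorial : ℝ))

noncomputable def Tgt (m : ℕ) : ℝ := ∑ μ : Nat.Partition m, Wgt μ.parts

lemma permCount_cast (s : Multiset ℕ) :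
    (permCount s : ℝ) = ((Multiset.card s).factorial : ℝ) /
      ∏ j ∈ s.toFinset, ((s.count j).factorial : ℝ) := by
  have hdvd : (∏ j ∈ s.toFinset, (s.count j).factorial) ∣ (Multiset.card s).factorial := by
    rw [← Multiset.toFinset_sum_count_eq]
    exact Nat.prod_factorial_dvd_factorial_sum _ _
  have hne : ((∏ j ∈ s.toFinset, (s.count j).factorial : ℕ) : ℝ) ≠ 0 := by
    exact_mod_cast (Finset.prod_pos fun _ _ => Nat.factorial_pos _).ne'
  rw [permCount, Nat.cast_div hdvd hne, Nat.cast_prod]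

lemma eMul_add (a b : Multiset ℕ) : eMul (a + b) = eMul a * eMul b := by
  unfold eMul
  have h : a.sum + b.sum + (Multiset.card a + Multiset.card b)
      = a.sum + Multiset.card a + (b.sum + Multiset.card b) := by omega
  rw [Multiset.sum_add, Multiset.card_add, Multiset.prod_add, Nat.cast_mul, h, pow_add,
    div_mul_div_comm]

lemma term_eq (s : Multiset ℕ) (hs : ∀ i ∈ s, 0 < i) :
    (permCount s : ℝ) / ((Multiset.card s).factorial : ℝ) * eMul s
      = (-1 : ℝ) ^ s.sum * Wgt s := by
  have hne1 : (((Multiset.card s).factorial : ℝ)) ≠ 0 :=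
    Nat.cast_ne_zero.2 (Nat.factorial_ne_zero _)
  have hne2 : (∏ j ∈ s.toFinset, ((s.count j).factorial : ℝ)) ≠ 0 :=
    Finset.prod_ne_zero_iff.2 fun _ _ => Nat.cast_ne_zero.2 (Nat.factorial_ne_zero _)
  have hne3 : (∏ j ∈ s.toFinset, ((j : ℝ)) ^ s.count j) ≠ 0 :=
    Finset.prod_ne_zero_iff.2 fun j hj =>
      pow_ne_zero _ (Nat.cast_ne_zero.2 (hs j (Multiset.mem_toFinset.mp hj)).ne')
  have hprod : (s.prod : ℝ) = ∏ j ∈ s.toFinset, (j : ℝ) ^ s.count j := by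
    rw [Finset.prod_multiset_count]
    push_cast
    rfl
  have hcard : ((-1 : ℝ)) ^ (Multiset.card s) = ∏ j ∈ s.toFinset, (-1 : ℝ) ^ s.count j := by
    rw [Finset.prod_pow_eq_pow_sum, Multiset.toFinset_sum_count_eq]
  have key : Wgt s = (∏ j ∈ s.toFinset, (-1 : ℝ) ^ s.count j) /
      ((∏ j ∈ s.toFinset, (j : ℝ) ^ s.count j) *
        (∏ j ∈ s.toFinset, ((s.count j).factorial : ℝ))) := by
    rw [Wgt, ← Finset.prod_mul_distrib, ← Finset.prod_div_distrib]
    refine Finset.prod_congr rfl fun j hj => ?_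
    rw [div_pow, div_div]
  rw [key, permCount_cast, eMul, pow_add, hprod, hcard]
  field_simp

lemma Wgt_erase (s : Multiset ℕ) (hs : ∀ i ∈ s, 0 < i) (j : ℕ) (hj : j ∈ s) :
    (j : ℝ) * (s.count j : ℝ) * Wgt s = - Wgt (s.erase j) := by
  have hmem : j ∈ s.toFinset := Multiset.mem_toFinset.2 hj
  have h1 : Wgt (s.erase j) = ∏ k ∈ s.toFinset,
      ((-1 / (k : ℝ)) ^ ((s.erase j).count k) / (((s.erase j).count k).factorial : ℝ)) := by
    unfold Wgt
    refine Finset.prod_subset ?_ ?_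
    · intro x hx
      exact Multiset.mem_toFinset.2 (Multiset.mem_of_mem_erase (Multiset.mem_toFinset.1 hx))
    · intro x _ hnx
      have : (s.erase j).count x = 0 :=
        Multiset.count_eq_zero.2 fun h => hnx (Multiset.mem_toFinset.2 h)
      simp [this]
  rw [h1, Wgt, ← Finset.mul_prod_erase _ _ hmem, ← Finset.mul_prod_erase _ _ hmem]
  have htail : ∏ k ∈ s.toFinset.erase j,
      ((-1 / (k : ℝ)) ^ ((s.erase j).count k) / (((s.erase j).count k).factorial : ℝ))
      = ∏ k ∈ s.toFinset.erase j,
        ((-1 / (k : ℝ)) ^ (s.count k) / ((s.count k).factorial : ℝ)) := by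
    refine Finset.prod_congr rfl fun k hk => ?_
    rw [Multiset.count_erase_of_ne (Finset.ne_of_mem_erase hk)]
  rw [htail]
  obtain ⟨n, hn⟩ : ∃ n, s.count j = n + 1 :=
    ⟨s.count j - 1, (Nat.succ_pred_eq_of_pos (Multiset.count_pos.2 hj)).symm⟩
  have hcount : (s.erase j).count j = n := by
    rw [Multiset.count_erase_self, hn]
    omega
  have hj0 : (j : ℝ) ≠ 0 := Nat.cast_ne_zero.2 (hs j hj).ne'
  have hn0 : ((n.factorial : ℝ)) ≠ 0 := Nat.cast_ne_zero.2 n.factorial_ne_zero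
  have hn1 : ((n : ℝ) + 1) ≠ 0 := by positivity
  rw [hcount, hn]
  have hscal : (j : ℝ) * ((n : ℝ) + 1) *
      ((-1 / (j : ℝ)) ^ (n + 1) / (((n + 1).factorial : ℝ)))
      = -((-1 / (j : ℝ)) ^ n / ((n.factorial : ℝ))) := by
    rw [pow_succ, Nat.factorial_succ]
    push_cast
    field_simp
  push_cast
  linear_combination (∏ k ∈ s.toFinset.erase j,
    ((-1 / (k : ℝ)) ^ (s.count k) / ((s.count k).factorial : ℝ))) * hscal

lemma Tgt_rec (m : ℕ) : (m : ℝ) * Tgt m = - ∑ k ∈ Finset.range m, Tgt k := by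
  have step1 : (m : ℝ) * Tgt m =
      - ∑ μ : Nat.Partition m, ∑ j ∈ μ.parts.toFinset, Wgt (μ.parts.erase j) := by
    rw [Tgt, Finset.mul_sum, ← Finset.sum_neg_distrib]
    refine Finset.sum_congr rfl fun μ _ => ?_
    have hsum : (m : ℝ) = ∑ j ∈ μ.parts.toFinset, (j : ℝ) * (μ.parts.count j : ℝ) := by
      calc (m : ℝ) = ((μ.parts.sum : ℕ) : ℝ) := by rw [μ.parts_sum]
        _ = _ := by
            rw [Finset.sum_multiset_count]
            push_cast [smul_eq_mul]
            exact Finset.sum_congr rfl fun j _ => mul_comm _ _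
    rw [hsum, Finset.sum_mul, ← Finset.sum_neg_distrib]
    refine Finset.sum_congr rfl fun j hj => ?_
    rw [Wgt_erase μ.parts (fun i hi => μ.parts_pos hi) j (Multiset.mem_toFinset.1 hj)]
  rw [step1]
  congr 1
  rw [Finset.sum_comm' (t' := Finset.Icc 1 m)
    (s' := fun j => Finset.univ.filter fun μ : Nat.Partition m => j ∈ μ.parts.toFinset)
    (by
      intro μ j
      constructor
      · rintro ⟨-, hj⟩
        have hj' := Multiset.mem_toFinset.1 hj
        refine ⟨Finset.mem_filter.2 ⟨Finset.mem_univ _, hj⟩,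
          Finset.mem_Icc.2 ⟨μ.parts_pos hj', ?_⟩⟩
        calc j ≤ μ.parts.sum := Multiset.le_sum_of_mem hj'
          _ = m := μ.parts_sum
      · rintro ⟨hμ, -⟩
        exact ⟨Finset.mem_univ _, (Finset.mem_filter.1 hμ).2⟩)]
  have step2 : ∀ j ∈ Finset.Icc 1 m,
      (∑ μ ∈ Finset.univ.filter fun μ : Nat.Partition m => j ∈ μ.parts.toFinset,
        Wgt (μ.parts.erase j)) = Tgt (m - j) := by
    intro j hj
    obtain ⟨hj1, hjm⟩ := Finset.mem_Icc.1 hj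
    rw [Tgt]
    refine Finset.sum_bij'
      (i := fun μ hμ => Nat.Partition.mk (μ.parts.erase j)
        (fun {i} hi => μ.parts_pos (Multiset.mem_of_mem_erase hi))
        (by
          have hjp : j ∈ μ.parts :=
            Multiset.mem_toFinset.1 (Finset.mem_filter.1 hμ).2
          have h2 : (j ::ₘ μ.parts.erase j).sum = μ.parts.sum := by
            rw [Multiset.cons_erase hjp]
          rw [Multiset.sum_cons, μ.parts_sum] at h2
          omega))
      (j := fun ν _ => Nat.Partition.mk (j ::ₘ ν.parts)
        (fun {i} hi => by
          rcases Multiset.mem_cons.1 hi with h | h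
          · omega
          · exact ν.parts_pos h)
        (by rw [Multiset.sum_cons, ν.parts_sum]; omega))
      (fun μ hμ => Finset.mem_univ _)
      (fun ν hν => Finset.mem_filter.2 ⟨Finset.mem_univ _,
        Multiset.mem_toFinset.2 (Multiset.mem_cons_self _ _)⟩)
      (fun μ hμ => Nat.Partition.ext (Multiset.cons_erase
        (Multiset.mem_toFinset.1 (Finset.mem_filter.1 hμ).2)))
      (fun ν hν => Nat.Partition.ext (Multiset.erase_cons_head _ _))
      (fun μ hμ => rfl)
  rw [Finset.sum_congr rfl step2]
  refine Finset.sum_nbij' (i := fun j => m - j) (j := fun k => m - k) ?_ ?_ ?_ ?_ ?_ <;>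
    intro j hj <;>
    simp only [Finset.mem_Icc, Finset.mem_range] at * <;>
    omega

lemma Tgt_zero : Tgt 0 = 1 := by
  simp [Tgt, Wgt]

lemma Tgt_one : Tgt 1 = -1 := by
  simp [Tgt, Wgt]

lemma Tgt_eq_zero : ∀ m, 2 ≤ m → Tgt m = 0 := by
  intro m
  induction m using Nat.strong_induction_on with
  | _ m ih =>
    intro hm
    have hrec := Tgt_rec m
    have hsum : ∑ k ∈ Finset.range m, Tgt k = 0 := by
      rw [Finset.range_eq_Ico,
        ← Finset.sum_Ico_consecutive _ (by omega : 0 ≤ 2) (by omega : 2 ≤ m)]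
      have h1 : ∑ k ∈ Finset.Ico 0 2, Tgt k = 0 := by
        rw [← Finset.range_eq_Ico]
        rw [Finset.sum_range_succ, Finset.sum_range_succ, Finset.sum_range_zero]
        rw [Tgt_zero, Tgt_one]
        ring
      have h2 : ∑ k ∈ Finset.Ico 2 m, Tgt k = 0 :=
        Finset.sum_eq_zero fun k hk =>
          ih k (Finset.mem_Ico.1 hk).2 (Finset.mem_Ico.1 hk).1
      rw [h1, h2, add_zero]
    rw [hsum, neg_zero] at hrec
    have hm0 : (m : ℝ) ≠ 0 := Nat.cast_ne_zero.2 (by omega)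
    exact (mul_eq_zero.1 hrec).resolve_left hm0

/-- Let `M ≥ 2` and let `β` be a (possibly empty) partition with
`Σ(β) ≤ M − 2`.  Then `∑_{μ ∈ P(M−Σ(β))} (perm(μ)/|μ|!) e_{β+μ} = 0`. -/
theorem bombieri_sieve_stmt9 (M : ℕ) (hM : 2 ≤ M) (β : Multiset ℕ)
    (hβ : ∀ i ∈ β, 0 < i) (hsum : β.sum ≤ M - 2) :
    ∑ μ : Nat.Partition (M - β.sum),
      ((permCount μ.parts : ℝ) / ((Multiset.card μ.parts).factorial : ℝ)) *
        eMul (β + μ.parts) = 0 := by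

  have hm2 : 2 ≤ M - β.sum := by omega
  have hterm : ∀ μ : Nat.Partition (M - β.sum),
      ((permCount μ.parts : ℝ) / ((Multiset.card μ.parts).factorial : ℝ)) *
        eMul (β + μ.parts) = eMul β * ((-1 : ℝ) ^ (M - β.sum) * Wgt μ.parts) := by
    intro μ
    have ht := term_eq μ.parts (fun i hi => μ.parts_pos hi)
    rw [μ.parts_sum] at ht
    rw [eMul_add]
    linear_combination eMul β * ht
  rw [Finset.sum_congr rfl fun μ _ => hterm μ, ← Finset.mul_sum, ← Finset.mul_sum]
  rw [show (∑ μ : Nat.Partition (M - β.sum), Wgt μ.parts) = Tgt (M - β.sum) from rfl,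
    Tgt_eq_zero _ hm2]
  ring
end

section
/- For every integer M ≥ 1, W(M,0) = 1 and W(M,1) = −1. -/
open Finset

/-- `W(M,N) = ∑_{r=1}^{M} (1/r!) ∑_{d_1+⋯+d_r=M, d_i ≥ 1} (1/(d_1⋯d_r))
∑_{ε ∈ {0,1}^r, ε_1 d_1+⋯+ε_r d_r = N} (−1)^{ε_1+⋯+ε_r}`. -/
noncomputable def compFS (r m : ℕ) : Finset (Fin r → ℕ) :=
  (Fintype.piFinset fun _ : Fin r => Finset.Icc 1 m).filter (fun d => ∑ i, d i = m)

lemma mem_compFS_bound {r m b : ℕ} (hb : m ≤ b) {d : Fin r → ℕ} :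
    d ∈ (Fintype.piFinset fun _ : Fin r => Finset.Icc 1 b).filter (fun d => ∑ i, d i = m) ↔
      (∀ i, 1 ≤ d i) ∧ ∑ i, d i = m := by
  simp only [mem_filter, Fintype.mem_piFinset, mem_Icc]
  constructor
  · rintro ⟨h1, h2⟩; exact ⟨fun i => (h1 i).1, h2⟩
  · rintro ⟨h1, h2⟩
    refine ⟨fun i => ⟨h1 i, ?_⟩, h2⟩
    calc d i ≤ ∑ j, d j := Finset.single_le_sum (fun j _ => Nat.zero_le _) (mem_univ i)
      _ = m := h2
      _ ≤ b := hb

lemma mem_compFS {r m : ℕ} {d : Fin r → ℕ} :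
    d ∈ compFS r m ↔ (∀ i, 1 ≤ d i) ∧ ∑ i, d i = m :=
  mem_compFS_bound le_rfl

noncomputable def Cc (r m : ℕ) : ℝ := ∑ d ∈ compFS r m, (∏ i, (d i : ℝ))⁻¹

lemma compFS_zero_zero : compFS 0 0 = {![]} := by
  ext d
  simp [mem_compFS]
  exact Subsingleton.elim d ![]

lemma Cc_zero_zero : Cc 0 0 = 1 := by
  rw [Cc, compFS_zero_zero]
  simp

lemma Cc_zero_pos {m : ℕ} (hm : 1 ≤ m) : Cc 0 m = 0 := by
  rw [Cc]
  apply Finset.sum_eq_zero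
  intro d hd
  rw [mem_compFS] at hd
  simp at hd
  omega

lemma Cc_eq_zero_of_lt {r m : ℕ} (h : m < r) : Cc r m = 0 := by
  rw [Cc]
  apply Finset.sum_eq_zero
  intro d hd
  rw [mem_compFS] at hd
  have : (r : ℕ) ≤ ∑ i, d i := by
    calc (r : ℕ) = ∑ _i : Fin r, 1 := by simp
      _ ≤ ∑ i, d i := Finset.sum_le_sum (fun i _ => hd.1 i)
  omega

lemma sym_lemma (s m : ℕ) (φ : ℕ → ℝ) :
    ∑ d ∈ compFS (s+1) m, (∑ i, φ (d i)) * (∏ j, (d j : ℝ))⁻¹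
      = (s+1 : ℝ) * ∑ d ∈ compFS (s+1) m, φ (d 0) * (∏ j, (d j : ℝ))⁻¹ := by
  have key : ∀ i : Fin (s+1),
      ∑ d ∈ compFS (s+1) m, φ (d i) * (∏ j, (d j : ℝ))⁻¹
        = ∑ d ∈ compFS (s+1) m, φ (d 0) * (∏ j, (d j : ℝ))⁻¹ := by
    intro i
    refine Finset.sum_nbij' (fun d => d ∘ Equiv.swap i 0) (fun d => d ∘ Equiv.swap i 0)
      ?_ ?_ ?_ ?_ ?_
    · intro d hd
      rw [mem_compFS] at hd ⊢
      exact ⟨fun j => hd.1 _, by rw [show (∑ j, (d ∘ Equiv.swap i 0) j) = ∑ j, d j from Equiv.sum_comp (Equiv.swap i 0) d]; exact hd.2⟩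
    · intro d hd
      rw [mem_compFS] at hd ⊢
      exact ⟨fun j => hd.1 _, by rw [show (∑ j, (d ∘ Equiv.swap i 0) j) = ∑ j, d j from Equiv.sum_comp (Equiv.swap i 0) d]; exact hd.2⟩
    · intro d _; funext j; simp
    · intro d _; funext j; simp
    · intro d _
      simp only [Function.comp_apply, Equiv.swap_apply_right]
      rw [show (∏ x, (d (Equiv.swap i 0 x) : ℝ)) = ∏ j, (d j : ℝ) from
        Equiv.prod_comp (Equiv.swap i 0) (fun j => (d j : ℝ))]
  calc ∑ d ∈ compFS (s+1) m, (∑ i, φ (d i)) * (∏ j, (d j : ℝ))⁻¹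
      = ∑ d ∈ compFS (s+1) m, ∑ i, φ (d i) * (∏ j, (d j : ℝ))⁻¹ := by
        simp_rw [Finset.sum_mul]
    _ = ∑ i : Fin (s+1), ∑ d ∈ compFS (s+1) m, φ (d i) * (∏ j, (d j : ℝ))⁻¹ :=
        Finset.sum_comm
    _ = ∑ _i : Fin (s+1), ∑ d ∈ compFS (s+1) m, φ (d 0) * (∏ j, (d j : ℝ))⁻¹ :=
        Finset.sum_congr rfl fun i _ => key i
    _ = (s+1 : ℝ) * ∑ d ∈ compFS (s+1) m, φ (d 0) * (∏ j, (d j : ℝ))⁻¹ := by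
        rw [Finset.sum_const, card_univ, Fintype.card_fin, nsmul_eq_mul]
        push_cast; ring

lemma peel_lemma (s m : ℕ) (φ : ℕ → ℝ) :
    ∑ d ∈ compFS (s+1) m, φ (d 0) * (∏ j, (d j : ℝ))⁻¹
      = ∑ k ∈ Finset.Icc 1 m, (φ k / k) * Cc s (m - k) := by
  simp_rw [Cc, Finset.mul_sum]
  rw [Finset.sum_sigma']
  refine Finset.sum_nbij' (fun d : Fin (s+1) → ℕ => (⟨d 0, Fin.tail d⟩ : Σ _k : ℕ, (Fin s → ℕ)))
    (fun p => Fin.cons p.1 p.2) ?_ ?_ ?_ ?_ ?_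
  · intro d hd
    rw [mem_compFS] at hd
    obtain ⟨h1, h2⟩ := hd
    have hd0 : d 0 ≤ m := by
      calc d 0 ≤ ∑ j, d j := Finset.single_le_sum (fun j _ => Nat.zero_le _) (mem_univ 0)
        _ = m := h2
    rw [Finset.mem_sigma, mem_Icc, mem_compFS]
    refine ⟨⟨h1 0, hd0⟩, fun i => h1 _, ?_⟩
    have := Fin.sum_univ_succ d
    simp only [Fin.tail]
    omega
  · intro p hp
    rw [Finset.mem_sigma, mem_Icc, mem_compFS] at hp
    obtain ⟨⟨hk1, hkm⟩, he1, he2⟩ := hp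
    rw [mem_compFS]
    constructor
    · intro i
      refine Fin.cases ?_ ?_ i
      · simpa using hk1
      · intro j; simpa using he1 j
    · rw [Fin.sum_univ_succ]
      simp only [Fin.cons_zero, Fin.cons_succ]
      omega
  · intro d _; exact Fin.cons_self_tail d
  · intro p _; simp
  · intro d hd
    rw [mem_compFS] at hd
    rw [Fin.prod_univ_succ]
    have : ((d 0 : ℝ) * ∏ j : Fin s, (d j.succ : ℝ))⁻¹
        = (d 0 : ℝ)⁻¹ * (∏ j : Fin s, (d j.succ : ℝ))⁻¹ := by
      rw [mul_inv]
    rw [this]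
    simp only [Fin.tail]
    ring

noncomputable def Sp (m : ℕ) : ℝ := ∑ r ∈ Finset.range (m+1), Cc r m / r.factorial

lemma Sp_zero : Sp 0 = 1 := by
  simp [Sp, Cc_zero_zero]

lemma key_C (s m : ℕ) (hm : 1 ≤ m) :
    (m : ℝ) * Cc (s+1) m = (s+1 : ℝ) * ∑ k ∈ Finset.Icc 1 m, Cc s (m - k) := by
  have h1 : (m : ℝ) * Cc (s+1) m
      = ∑ d ∈ compFS (s+1) m, (∑ i, ((d i : ℕ) : ℝ)) * (∏ j, (d j : ℝ))⁻¹ := by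
    rw [Cc, Finset.mul_sum]
    refine Finset.sum_congr rfl fun d hd => ?_
    rw [mem_compFS] at hd
    rw [show (∑ i, ((d i : ℕ) : ℝ)) = ((∑ i, d i : ℕ) : ℝ) from (Nat.cast_sum _ _).symm, hd.2]
  rw [h1, sym_lemma s m (fun n => (n : ℝ)), peel_lemma s m (fun n => (n : ℝ))]
  congr 1
  refine Finset.sum_congr rfl fun k hk => ?_
  rw [mem_Icc] at hk
  have : (k : ℝ) ≠ 0 := Nat.cast_ne_zero.mpr (by omega)
  field_simp

lemma Sp_rec {m : ℕ} (hm : 1 ≤ m) : (m : ℝ) * Sp m = ∑ k ∈ Finset.Icc 1 m, Sp (m - k) := by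
  rw [Sp, Finset.mul_sum, Finset.sum_range_succ']
  have h0 : (m : ℝ) * (Cc 0 m / (Nat.factorial 0 : ℝ)) = 0 := by
    rw [Cc_zero_pos hm]; ring
  rw [h0, add_zero]
  have hterm : ∀ s, (m : ℝ) * (Cc (s+1) m / (Nat.factorial (s+1) : ℝ))
      = ∑ k ∈ Finset.Icc 1 m, Cc s (m - k) / (Nat.factorial s : ℝ) := by
    intro s
    have hfac : (Nat.factorial (s+1) : ℝ) = (s+1 : ℝ) * (Nat.factorial s : ℝ) := by
      rw [Nat.factorial_succ]; push_cast; ring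
    have hs1 : (s+1 : ℝ) ≠ 0 := by positivity
    have hfs : (Nat.factorial s : ℝ) ≠ 0 := Nat.cast_ne_zero.mpr (Nat.factorial_ne_zero s)
    rw [← Finset.sum_div, eq_div_iff hfs]
    have := key_C s m hm
    field_simp [hfac]
    linear_combination (s.factorial : ℝ) * this - (∑ i ∈ Finset.Icc 1 m, Cc s (m - i)) * hfac
  rw [Finset.sum_congr rfl fun s _ => hterm s, Finset.sum_comm]
  refine Finset.sum_congr rfl fun k hk => ?_
  rw [mem_Icc] at hk
  rw [Sp]
  refine (Finset.sum_subset ?_ ?_).symm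
  · intro x hx
    rw [Finset.mem_range] at hx ⊢
    omega
  · intro x _ hx
    rw [Finset.mem_range] at hx
    rw [Cc_eq_zero_of_lt (by rw [Finset.mem_range] at *; omega)]
    ring

lemma Sp_eq_one (m : ℕ) : Sp m = 1 := by
  induction m using Nat.strong_induction_on with
  | _ m ih =>
    rcases Nat.eq_zero_or_pos m with h | h
    · subst h; exact Sp_zero
    · have hrec := Sp_rec h
      have : ∑ k ∈ Finset.Icc 1 m, Sp (m - k) = (m : ℝ) := by
        rw [Finset.sum_congr rfl fun k hk => ih (m - k) (by rw [mem_Icc] at hk; omega)]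
        simp [Nat.card_Icc]
      rw [this] at hrec
      have hm0 : (m : ℝ) ≠ 0 := Nat.cast_ne_zero.mpr (by omega)
      field_simp at hrec
      linarith

lemma eps_sum_zero {r : ℕ} {d : Fin r → ℕ} (hd : ∀ i, 1 ≤ d i) :
    ∑ ε ∈ (Fintype.piFinset fun _ : Fin r => ({0, 1} : Finset ℕ)).filter
        (fun ε => ∑ i, ε i * d i = 0), (-1 : ℝ) ^ (∑ i, ε i) = 1 := by
  have hset : (Fintype.piFinset fun _ : Fin r => ({0, 1} : Finset ℕ)).filter
      (fun ε => ∑ i, ε i * d i = 0) = {fun _ => 0} := by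
    ext ε
    simp only [mem_filter, Fintype.mem_piFinset, Finset.mem_insert, Finset.mem_singleton]
    constructor
    · rintro ⟨h1, h2⟩
      funext i
      have hi := (Finset.sum_eq_zero_iff.mp h2) i (mem_univ i)
      have hdi := hd i
      show ε i = 0
      rcases Nat.mul_eq_zero.mp hi with h | h
      · exact h
      · omega
    · rintro rfl
      exact ⟨fun i => Or.inl rfl, by simp⟩
  rw [hset]
  simp

lemma eps_sum_one {r : ℕ} {d : Fin r → ℕ} (hd : ∀ i, 1 ≤ d i) :
    ∑ ε ∈ (Fintype.piFinset fun _ : Fin r => ({0, 1} : Finset ℕ)).filter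
        (fun ε => ∑ i, ε i * d i = 1), (-1 : ℝ) ^ (∑ i, ε i)
      = - ∑ i : Fin r, (if d i = 1 then (1 : ℝ) else 0) := by
  have key : ∑ i ∈ univ.filter (fun i => d i = 1), (-1 : ℝ)
      = ∑ ε ∈ (Fintype.piFinset fun _ : Fin r => ({0, 1} : Finset ℕ)).filter
        (fun ε => ∑ i, ε i * d i = 1), (-1 : ℝ) ^ (∑ i, ε i) := by
    refine Finset.sum_bij (fun i _ => (fun j => if j = i then 1 else 0 : Fin r → ℕ))
      ?_ ?_ ?_ ?_
    · intro i hi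
      rw [mem_filter] at hi
      rw [mem_filter, Fintype.mem_piFinset]
      constructor
      · intro j
        by_cases h : j = i <;> simp [h]
      · have heq : ∀ j : Fin r, (if j = i then 1 else 0) * d j = if j = i then d j else 0 := by
          intro j; split <;> simp
        rw [Finset.sum_congr rfl fun j _ => heq j, Finset.sum_ite_eq' univ i d]
        simp [hi.2]
    · intro a ha b hb hab
      have := congrFun hab a
      by_cases h : a = b
      · exact h
      · simp [h] at this
    · intro ε hε
      rw [mem_filter, Fintype.mem_piFinset] at hε
      obtain ⟨h1, h2⟩ := hε
      have hex : ∃ i, ε i * d i ≠ 0 := by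
        by_contra hc
        push_neg at hc
        have : ∑ i, ε i * d i = 0 := Finset.sum_eq_zero fun i _ => hc i
        omega
      obtain ⟨i, hi⟩ := hex
      have hεi : ε i = 1 := by
        have := h1 i
        simp only [Finset.mem_insert, Finset.mem_singleton] at this
        rcases this with h | h
        · exfalso; apply hi; rw [h]; ring
        · exact h
      have hle : ε i * d i ≤ 1 := by
        rw [← h2]
        exact Finset.single_le_sum (f := fun j => ε j * d j)
          (fun j _ => Nat.zero_le _) (mem_univ i)
      rw [hεi, one_mul] at hle
      have hdi : d i = 1 := by have := hd i; omega
      have hrest : ∀ j, j ≠ i → ε j = 0 := by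
        intro j hj
        have hz : ∑ k ∈ univ.erase i, ε k * d k = 0 := by
          have hsplit := Finset.add_sum_erase univ (fun j => ε j * d j) (mem_univ i)
          rw [h2, hεi, hdi] at hsplit
          omega
        have hjz := (Finset.sum_eq_zero_iff.mp hz) j (by simp [hj])
        have := hd j
        rcases Nat.mul_eq_zero.mp hjz with h | h
        · exact h
        · omega
      refine ⟨i, by simp [mem_filter, hdi], ?_⟩
      funext j
      by_cases h : j = i
      · subst h; simp [hεi]
      · simp [h, hrest j h]
    · intro i hi
      have hsum : ∑ j : Fin r, (if j = i then 1 else 0) = 1 := by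
        rw [Finset.sum_ite_eq' univ i (fun _ => 1)]
        simp
      simp only []
      rw [hsum]
      ring
  rw [← key, Finset.sum_const]
  have : ∑ i : Fin r, (if d i = 1 then (1:ℝ) else 0)
      = ∑ i ∈ univ.filter (fun i => d i = 1), (1:ℝ) := (Finset.sum_filter _ _).symm
  rw [this, Finset.sum_const]
  simp

lemma Icc_sum_eq (M : ℕ) (f : ℕ → ℝ) :
    ∑ r ∈ Finset.Icc 1 M, f r = ∑ s ∈ Finset.range M, f (s+1) := by
  rw [← Finset.Ico_add_one_right_eq_Icc, Finset.sum_Ico_eq_sum_range]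
  simp [add_comm]

noncomputable def Wfun (M N : ℕ) : ℝ :=
  ∑ r ∈ Finset.Icc 1 M, (1 / (r.factorial : ℝ)) *
    ∑ d ∈ (Fintype.piFinset fun _ : Fin r => Finset.Icc 1 M).filter
        (fun d => ∑ i, d i = M),
      (∏ i, (d i : ℝ))⁻¹ *
        ∑ ε ∈ (Fintype.piFinset fun _ : Fin r => ({0, 1} : Finset ℕ)).filter
            (fun ε => ∑ i, ε i * d i = N),
          (-1 : ℝ) ^ (∑ i, ε i)

/-- For every `M ≥ 1`, `W(M,0) = 1` and `W(M,1) = −1`. -/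
theorem bombieri_sieve_stmt10 (M : ℕ) (hM : 1 ≤ M) :
    Wfun M 0 = 1 ∧ Wfun M 1 = -1 := by
  constructor
  · have e0 : Wfun M 0 = ∑ r ∈ Finset.Icc 1 M, Cc r M / r.factorial := by
      rw [Wfun]
      refine Finset.sum_congr rfl fun r hr => ?_
      have hset : (Fintype.piFinset fun _ : Fin r => Finset.Icc 1 M).filter
          (fun d => ∑ i, d i = M) = compFS r M := rfl
      rw [hset]
      have hinner : ∀ d ∈ compFS r M,
          (∏ i, (d i : ℝ))⁻¹ * (∑ ε ∈ (Fintype.piFinset fun _ : Fin r => ({0, 1} : Finset ℕ)).filter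
            (fun ε => ∑ i, ε i * d i = 0), (-1 : ℝ) ^ (∑ i, ε i))
            = (∏ i, (d i : ℝ))⁻¹ := by
        intro d hd
        rw [eps_sum_zero (mem_compFS.mp hd).1, mul_one]
      rw [Finset.sum_congr rfl hinner, ← Cc]
      ring
    rw [e0, Icc_sum_eq M (fun r => Cc r M / r.factorial)]
    have : Sp M = ∑ s ∈ Finset.range M, Cc (s+1) M / (s+1).factorial := by
      rw [Sp, Finset.sum_range_succ', Cc_zero_pos hM]
      simp
    rw [← this, Sp_eq_one]
  · have e0 : Wfun M 1 = ∑ r ∈ Finset.Icc 1 M, -(Cc (r-1) (M-1) / ((r-1).factorial : ℝ)) := by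
      rw [Wfun]
      refine Finset.sum_congr rfl fun r hr => ?_
      rw [mem_Icc] at hr
      obtain ⟨s, rfl⟩ : ∃ s, r = s + 1 := ⟨r - 1, by omega⟩
      have hset : (Fintype.piFinset fun _ : Fin (s+1) => Finset.Icc 1 M).filter
          (fun d => ∑ i, d i = M) = compFS (s+1) M := rfl
      rw [hset]
      have hinner : ∀ d ∈ compFS (s+1) M,
          (∏ i, (d i : ℝ))⁻¹ * (∑ ε ∈ (Fintype.piFinset fun _ : Fin (s+1) => ({0, 1} : Finset ℕ)).filter
            (fun ε => ∑ i, ε i * d i = 1), (-1 : ℝ) ^ (∑ i, ε i))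
            = -((∑ i, (if d i = 1 then (1 : ℝ) else 0)) * (∏ j, (d j : ℝ))⁻¹) := by
        intro d hd
        rw [eps_sum_one (mem_compFS.mp hd).1]
        ring
      rw [Finset.sum_congr rfl hinner, Finset.sum_neg_distrib,
        sym_lemma s M (fun n => if n = 1 then (1:ℝ) else 0),
        peel_lemma s M (fun n => if n = 1 then (1:ℝ) else 0)]
      have hpick : ∑ k ∈ Finset.Icc 1 M, ((if k = 1 then (1:ℝ) else 0) / k) * Cc s (M - k)
          = Cc s (M - 1) := by
        rw [Finset.sum_eq_single_of_mem 1 (by rw [mem_Icc]; omega)]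
        · norm_num
        · intro k _ hk
          rw [if_neg hk]
          ring
      rw [hpick]
      have hs : ((s+1).factorial : ℝ) = (s+1 : ℝ) * (s.factorial : ℝ) := by
        rw [Nat.factorial_succ]; push_cast; ring
      have h1 : (s + 1 - 1 : ℕ) = s := by omega
      rw [h1, hs]
      have hf : (s.factorial : ℝ) ≠ 0 := Nat.cast_ne_zero.mpr (Nat.factorial_ne_zero s)
      have hs1 : (s + 1 : ℝ) ≠ 0 := by positivity
      field_simp
    rw [e0, Icc_sum_eq M (fun r => -(Cc (r-1) (M-1) / ((r-1).factorial : ℝ)))]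
    have : ∑ s ∈ Finset.range M, -(Cc ((s+1)-1) (M-1) / (((s+1)-1).factorial : ℝ))
        = - Sp (M-1) := by
      rw [Finset.sum_neg_distrib, Sp]
      congr 1
      refine Finset.sum_congr (by congr 1; omega) fun s _ => by norm_num
    rw [this, Sp_eq_one]
end

section
/- For every integer M ≥ 2 and every integer N with 2 ≤ N ≤ M, W(M,N) = 0. -/
open Finset

section BSaux
open Polynomial PowerSeries

noncomputable section BSaux

lemma coeff_derivativeFun' {R : Type*} [CommSemiring R] (f : PowerSeries R) (n : ℕ) :
    PowerSeries.coeff n f.derivativeFun = PowerSeries.coeff (n + 1) f * (n + 1) :=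
  PowerSeries.coeff_derivative f n

/-- The power series `∑_{d≥1} x^d (1 - y^d)/d` with coefficients in `ℝ[y]`. -/
def Fps : PowerSeries (Polynomial ℝ) :=
  PowerSeries.mk fun d => if d = 0 then 0 else Polynomial.C ((d : ℝ)⁻¹) * (1 - Polynomial.X ^ d)

/-- The truncated exponential of `Fps`, i.e. `exp Fps`. -/
def Eps : PowerSeries (Polynomial ℝ) :=
  PowerSeries.mk fun M => ∑ r ∈ Finset.range (M + 1),
    Polynomial.C ((r.factorial : ℝ)⁻¹) * PowerSeries.coeff M (Fps ^ r)

lemma constantCoeff_Fps : PowerSeries.constantCoeff Fps = 0 := by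
  rw [← PowerSeries.coeff_zero_eq_constantCoeff_apply, Fps, PowerSeries.coeff_mk, if_pos rfl]

lemma coeff_Fps_pow_eq_zero {M r : ℕ} (h : M < r) :
    PowerSeries.coeff M (Fps ^ r) = 0 := by
  have h1 : (PowerSeries.X : PowerSeries (Polynomial ℝ)) ∣ Fps :=
    PowerSeries.X_dvd_iff.2 constantCoeff_Fps
  have h2 : (PowerSeries.X : PowerSeries (Polynomial ℝ)) ^ r ∣ Fps ^ r :=
    pow_dvd_pow_of_dvd h1 r
  exact PowerSeries.X_pow_dvd_iff.1 h2 M h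

lemma coeff_Eps {M K : ℕ} (h : M < K) :
    PowerSeries.coeff M Eps = ∑ r ∈ Finset.range K,
      Polynomial.C ((r.factorial : ℝ)⁻¹) * PowerSeries.coeff M (Fps ^ r) := by
  rw [Eps, PowerSeries.coeff_mk]
  apply Finset.sum_subset
  · intro r hr
    simp only [Finset.mem_range] at hr ⊢; omega
  · intro r hr hr'
    simp only [Finset.mem_range, not_lt] at hr'
    rw [coeff_Fps_pow_eq_zero (by omega), mul_zero]

lemma coeff_dFps (n : ℕ) :
    PowerSeries.coeff n Fps.derivativeFun = 1 - Polynomial.X ^ (n + 1) := by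
  rw [coeff_derivativeFun', Fps, PowerSeries.coeff_mk, if_neg (Nat.succ_ne_zero n)]
  have h1 : ((n : Polynomial ℝ) + 1) = Polynomial.C ((n : ℝ) + 1) := by
    simp [Polynomial.C_add]
  rw [h1, mul_comm, ← mul_assoc, ← Polynomial.C_mul]
  have hne : ((n : ℝ) + 1) ≠ 0 := by positivity
  have h2 : ((n : ℝ) + 1) * ((n + 1 : ℕ) : ℝ)⁻¹ = 1 := by
    rw [mul_inv_eq_one₀ (by push_cast; positivity)]; push_cast; ring
  rw [h2, Polynomial.C_1, one_mul]

lemma dpow (f : PowerSeries (Polynomial ℝ)) (r : ℕ) :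
    (f ^ (r+1)).derivativeFun
      = ((r+1 : ℕ) : PowerSeries (Polynomial ℝ)) * (f ^ r * f.derivativeFun) := by
  induction r with
  | zero => simp
  | succ r ih =>
    rw [pow_succ, PowerSeries.derivativeFun_mul, ih]
    simp only [smul_eq_mul]
    push_cast
    ring

lemma dEps_eq : Eps.derivativeFun = Fps.derivativeFun * Eps := by
  apply PowerSeries.ext; intro n
  have hL : PowerSeries.coeff n Eps.derivativeFun
      = ∑ r ∈ Finset.range (n + 1), Polynomial.C ((r.factorial : ℝ)⁻¹)
        * PowerSeries.coeff n (Fps ^ r * Fps.derivativeFun) := by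
    rw [coeff_derivativeFun', coeff_Eps (by omega : n + 1 < n + 2),
      Finset.sum_mul, Finset.sum_range_succ']
    have h0 : Polynomial.C (((0:ℕ).factorial : ℝ)⁻¹) * PowerSeries.coeff (n+1) (Fps ^ 0)
        * ((n : Polynomial ℝ) + 1) = 0 := by
      simp [PowerSeries.coeff_one]
    rw [h0, add_zero]
    apply Finset.sum_congr rfl
    intro s _
    have hd : PowerSeries.coeff (n+1) (Fps ^ (s+1)) * ((n : Polynomial ℝ) + 1)
        = PowerSeries.coeff n (Fps ^ (s+1)).derivativeFun := by
      rw [coeff_derivativeFun']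
    have hc : (((s+1 : ℕ)) : PowerSeries (Polynomial ℝ))
        = PowerSeries.C (((s+1:ℕ) : Polynomial ℝ)) := (map_natCast _ _).symm
    rw [mul_assoc, hd, dpow, hc, PowerSeries.coeff_C_mul, ← mul_assoc,
      ← Polynomial.C_eq_natCast, ← Polynomial.C_mul]
    congr 2
    rw [Nat.factorial_succ]
    have hne1 : ((s+1 : ℕ) : ℝ) ≠ 0 := by positivity
    have hne2 : ((s.factorial : ℕ) : ℝ) ≠ 0 := by
      exact_mod_cast Nat.cast_ne_zero.mpr (Nat.factorial_ne_zero s)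
    push_cast
    field_simp
  have hR : PowerSeries.coeff n (Fps.derivativeFun * Eps)
      = ∑ r ∈ Finset.range (n + 1), Polynomial.C ((r.factorial : ℝ)⁻¹)
        * PowerSeries.coeff n (Fps ^ r * Fps.derivativeFun) := by
    rw [PowerSeries.coeff_mul]
    have hstep : ∀ p ∈ Finset.HasAntidiagonal.antidiagonal n,
        PowerSeries.coeff p.1 Fps.derivativeFun * PowerSeries.coeff p.2 Eps
        = ∑ r ∈ Finset.range (n + 1), Polynomial.C ((r.factorial : ℝ)⁻¹)
          * (PowerSeries.coeff p.1 Fps.derivativeFun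
            * PowerSeries.coeff p.2 (Fps ^ r)) := by
      intro p hp
      rw [Finset.HasAntidiagonal.mem_antidiagonal] at hp
      rw [coeff_Eps (by omega : p.2 < n + 1), Finset.mul_sum]
      apply Finset.sum_congr rfl
      intro r _
      ring
    rw [Finset.sum_congr rfl hstep, Finset.sum_comm]
    apply Finset.sum_congr rfl
    intro r _
    rw [← Finset.mul_sum, ← PowerSeries.coeff_mul, mul_comm Fps.derivativeFun]
  rw [hL, hR]

/-- abbreviation for the "constant" `y` inside `ℝ[y]⟦x⟧` -/
def Cy : PowerSeries (Polynomial ℝ) := PowerSeries.C Polynomial.X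

lemma keyB : (1 - PowerSeries.X * Cy) * ((1 - PowerSeries.X) * Fps.derivativeFun)
    = PowerSeries.C (1 - Polynomial.X) := by
  have hG : ∀ m : ℕ, PowerSeries.coeff m ((1 - PowerSeries.X) * Fps.derivativeFun)
      = if m = 0 then 1 - Polynomial.X else Polynomial.X ^ m - Polynomial.X ^ (m + 1) := by
    intro m
    rw [sub_mul, one_mul, map_sub]
    cases m with
    | zero => rw [PowerSeries.coeff_zero_X_mul, coeff_dFps]; simp
    | succ k =>
      rw [PowerSeries.coeff_succ_X_mul, coeff_dFps, coeff_dFps, if_neg (Nat.succ_ne_zero k)]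
      ring
  have hexp : (1 - PowerSeries.X * Cy) * ((1 - PowerSeries.X) * Fps.derivativeFun)
      = ((1 - PowerSeries.X) * Fps.derivativeFun)
        - PowerSeries.X * (Cy * ((1 - PowerSeries.X) * Fps.derivativeFun)) := by
    ring
  rw [hexp]
  apply PowerSeries.ext; intro n
  rw [map_sub, PowerSeries.coeff_C]
  cases n with
  | zero =>
    rw [PowerSeries.coeff_zero_X_mul, hG, if_pos rfl, if_pos rfl, sub_zero]
  | succ k =>
    rw [PowerSeries.coeff_succ_X_mul, Cy, PowerSeries.coeff_C_mul, hG, hG]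
    split_ifs <;> first | omega | (exfalso; assumption) | (subst ‹k = 0›; ring) | ring

def Ups : PowerSeries (Polynomial ℝ) := (1 - PowerSeries.X) * Eps

lemma d_one_sub_X : (1 - PowerSeries.X : PowerSeries (Polynomial ℝ)).derivativeFun = -1 := by
  apply PowerSeries.ext; intro n
  rw [coeff_derivativeFun', map_sub]
  cases n with
  | zero => simp [PowerSeries.coeff_one, PowerSeries.coeff_X]
  | succ k => simp [PowerSeries.coeff_one, PowerSeries.coeff_X]

lemma dUps : Ups.derivativeFun = (1 - PowerSeries.X) * Eps.derivativeFun - Eps := by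
  rw [Ups, PowerSeries.derivativeFun_mul, d_one_sub_X]
  simp only [smul_eq_mul]
  ring

lemma keyC : (1 - PowerSeries.X * Cy) * Ups.derivativeFun = -(Cy * Ups) := by
  have keyB' : (1 - PowerSeries.X * Cy) * ((1 - PowerSeries.X) * Fps.derivativeFun)
      = 1 - Cy := by
    rw [keyB, map_sub, map_one]; rfl
  rw [dUps, dEps_eq, Ups]
  linear_combination Eps * keyB'

lemma Ups_rec (k : ℕ) : ((k:Polynomial ℝ) + 2) * PowerSeries.coeff (k+2) Ups
    = Polynomial.X * (((k:Polynomial ℝ) + 1) * PowerSeries.coeff (k+1) Ups)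
      - Polynomial.X * PowerSeries.coeff (k+1) Ups := by
  have h := congrArg (PowerSeries.coeff (k+1)) keyC
  have hexp : (1 - PowerSeries.X * Cy) * Ups.derivativeFun
      = Ups.derivativeFun - PowerSeries.X * (Cy * Ups.derivativeFun) := by ring
  rw [hexp, map_sub, PowerSeries.coeff_succ_X_mul, Cy, PowerSeries.coeff_C_mul,
    map_neg, PowerSeries.coeff_C_mul, coeff_derivativeFun',
    coeff_derivativeFun'] at h
  push_cast at h ⊢
  have hh : k + 1 + 1 = k + 2 := by omega
  rw [hh] at h
  linear_combination h

lemma Ups_vanish : ∀ j : ℕ, PowerSeries.coeff (j+2) Ups = 0 := by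
  intro j
  induction j with
  | zero =>
    have h := Ups_rec 0
    simp only [Nat.cast_zero, zero_add] at h
    have h2 : (2:Polynomial ℝ) * PowerSeries.coeff 2 Ups = 0 := by
      rw [h]; ring
    have hne : (2:Polynomial ℝ) ≠ 0 := by norm_num
    exact (mul_eq_zero.1 h2).resolve_left hne
  | succ j ih =>
    have h := Ups_rec (j+1)
    rw [show j + 1 + 1 = j + 2 by omega, ih] at h
    simp only [mul_zero, sub_self] at h
    have hne : ((j+1 : ℕ) : Polynomial ℝ) + 2 ≠ 0 := by
      have h3 : ((j+1 : ℕ) : Polynomial ℝ) + 2 = ((j+3 : ℕ) : Polynomial ℝ) := by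
        push_cast; ring
      rw [h3]
      exact Nat.cast_ne_zero.mpr (by omega)
    exact (mul_eq_zero.1 h).resolve_left hne

lemma coeff_Eps_stable : ∀ M : ℕ, 1 ≤ M → PowerSeries.coeff M Eps = PowerSeries.coeff 1 Eps := by
  intro M
  induction M with
  | zero => intro h; omega
  | succ m ih =>
    intro _
    rcases Nat.eq_zero_or_pos m with rfl | hm
    · rfl
    · have hv : PowerSeries.coeff (m+1) Ups = 0 := by
        obtain ⟨j, rfl⟩ : ∃ j, m = j + 1 := ⟨m - 1, by omega⟩
        exact Ups_vanish j
      have hU : PowerSeries.coeff (m+1) Ups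
          = PowerSeries.coeff (m+1) Eps - PowerSeries.coeff m Eps := by
        rw [Ups, sub_mul, one_mul, map_sub, PowerSeries.coeff_succ_X_mul]
      rw [hU] at hv
      rw [sub_eq_zero] at hv
      rw [hv, ih hm]

lemma coeff_pow_pi (r M : ℕ) :
    PowerSeries.coeff M (Fps ^ r)
    = ∑ d ∈ (Fintype.piFinset fun _ : Fin r => Finset.range (M+1)).filter
        (fun d => ∑ i, d i = M),
      ∏ i, PowerSeries.coeff (d i) Fps := by
  rw [PowerSeries.coeff_pow]
  apply Finset.sum_nbij' (i := fun (l : ℕ →₀ ℕ) => fun i : Fin r => l i.val)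
    (j := fun (d : Fin r → ℕ) => Finsupp.onFinset (Finset.range r)
      (fun n => if h : n < r then d ⟨n, h⟩ else 0)
      (fun n hn => by
        rw [Finset.mem_range]
        by_contra hc
        exact hn (dif_neg hc)))
  · -- hi : maps into target
    intro l hl
    rw [Finset.mem_finsuppAntidiag] at hl
    obtain ⟨hsum, hsupp⟩ := hl
    rw [Finset.mem_filter]
    constructor
    · rw [Fintype.mem_piFinset]
      intro i
      rw [Finset.mem_range, Nat.lt_succ_iff, ← hsum]
      exact Finset.single_le_sum (f := fun n => l n) (fun _ _ => Nat.zero_le _)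
        (Finset.mem_range.2 i.isLt)
    · rw [← hsum, ← Fin.sum_univ_eq_sum_range]
  · -- hj
    intro d hd
    rw [Finset.mem_filter, Fintype.mem_piFinset] at hd
    obtain ⟨hmem, hsum⟩ := hd
    rw [Finset.mem_finsuppAntidiag]
    constructor
    · change ∑ n ∈ Finset.range r, (if h : n < r then d ⟨n, h⟩ else 0) = M
      rw [← Fin.sum_univ_eq_sum_range (fun n => if h : n < r then d ⟨n, h⟩ else 0) r]
      simp only [Fin.is_lt, dif_pos, Fin.eta]
      exact hsum
    · exact Finsupp.support_onFinset_subset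
  · -- left_inv
    intro l hl
    rw [Finset.mem_finsuppAntidiag] at hl
    ext n
    simp only [Finsupp.onFinset_apply]
    split_ifs with h
    · rfl
    · symm
      by_contra hc
      exact h (Finset.mem_range.1 (hl.2 (Finsupp.mem_support_iff.2 hc)))
  · -- right_inv
    intro d hd
    funext i
    simp only [Finsupp.onFinset_apply, i.isLt, dif_pos]
  · -- values
    intro l hl
    exact (Fin.prod_univ_eq_prod_range (fun n => PowerSeries.coeff (l n) Fps) r).symm

lemma coeff_pow_pi' (r M : ℕ) :
    PowerSeries.coeff M (Fps ^ r)
    = ∑ d ∈ (Fintype.piFinset fun _ : Fin r => Finset.Icc 1 M).filter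
        (fun d => ∑ i, d i = M),
      ∏ i, PowerSeries.coeff (d i) Fps := by
  rw [coeff_pow_pi]
  symm
  apply Finset.sum_subset
  · intro d hd
    rw [Finset.mem_filter, Fintype.mem_piFinset] at hd ⊢
    refine ⟨fun i => ?_, hd.2⟩
    have := hd.1 i
    rw [Finset.mem_Icc] at this
    rw [Finset.mem_range]
    omega
  · intro d hd hnd
    rw [Finset.mem_filter, Fintype.mem_piFinset] at hd
    have hnA : ¬ ∀ i, d i ∈ Finset.Icc 1 M := by
      intro hA
      exact hnd (Finset.mem_filter.2 ⟨Fintype.mem_piFinset.2 hA, hd.2⟩)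
    push_neg at hnA
    obtain ⟨i, hi⟩ := hnA
    rw [Finset.mem_Icc] at hi
    push_neg at hi
    have hle : d i ≤ M := by
      rw [← hd.2]
      exact Finset.single_le_sum (f := fun j => d j) (fun _ _ => Nat.zero_le _)
        (Finset.mem_univ i)
    have h0 : d i = 0 := by omega
    apply Finset.prod_eq_zero (Finset.mem_univ i)
    rw [h0, Fps, PowerSeries.coeff_mk, if_pos rfl]

lemma inner_coeff (r : ℕ) (d : Fin r → ℕ) (hd : ∀ i, d i ≠ 0) (N : ℕ) :
    (∏ i, PowerSeries.coeff (d i) Fps).coeff N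
    = (∏ i, (d i : ℝ))⁻¹ *
        ∑ ε ∈ (Fintype.piFinset fun _ : Fin r => ({0, 1} : Finset ℕ)).filter
            (fun ε => ∑ i, ε i * d i = N),
          (-1 : ℝ) ^ (∑ i, ε i) := by
  have h1 : ∀ i : Fin r, PowerSeries.coeff (d i) Fps
      = Polynomial.C ((d i : ℝ)⁻¹) * (1 - Polynomial.X ^ (d i)) := by
    intro i
    rw [Fps, PowerSeries.coeff_mk, if_neg (hd i)]
  rw [Finset.prod_congr rfl (fun i _ => h1 i), Finset.prod_mul_distrib, ← map_prod]
  have h2 : (∏ i, (1 - Polynomial.X ^ (d i)) : Polynomial ℝ)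
      = ∑ ε ∈ Fintype.piFinset (fun _ : Fin r => ({0, 1} : Finset ℕ)),
          (-1 : Polynomial ℝ) ^ (∑ i, ε i) * Polynomial.X ^ (∑ i, ε i * d i) := by
    have h3 : ∀ i : Fin r, (1 - Polynomial.X ^ (d i) : Polynomial ℝ)
        = ∑ j ∈ ({0, 1} : Finset ℕ), (-(Polynomial.X ^ (d i))) ^ j := by
      intro i
      rw [show ({0, 1} : Finset ℕ) = insert 0 {1} from rfl,
        Finset.sum_insert (by decide), Finset.sum_singleton, pow_zero, pow_one]
      ring
    rw [Finset.prod_congr rfl (fun i _ => h3 i), Finset.prod_univ_sum]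
    apply Finset.sum_congr rfl
    intro ε _
    have h4 : ∀ i : Fin r, (-(Polynomial.X ^ (d i)) : Polynomial ℝ) ^ (ε i)
        = (-1 : Polynomial ℝ) ^ (ε i) * Polynomial.X ^ (ε i * d i) := by
      intro i
      rw [neg_pow, ← pow_mul, mul_comm (d i)]
    rw [Finset.prod_congr rfl (fun i _ => h4 i), Finset.prod_mul_distrib,
      Finset.prod_pow_eq_pow_sum, Finset.prod_pow_eq_pow_sum]
  rw [h2, Polynomial.coeff_C_mul, Polynomial.finset_sum_coeff, ← Finset.prod_inv_distrib]
  congr 1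
  have h5 : ∀ ε : Fin r → ℕ,
      ((-1 : Polynomial ℝ) ^ (∑ i, ε i) * Polynomial.X ^ (∑ i, ε i * d i)).coeff N
      = (-1 : ℝ) ^ (∑ i, ε i) * (if ∑ i, ε i * d i = N then 1 else 0) := by
    intro ε
    have hc : ((-1 : Polynomial ℝ)) ^ (∑ i, ε i) = Polynomial.C ((-1 : ℝ) ^ (∑ i, ε i)) := by
      rw [map_pow, map_neg, map_one]
    rw [hc, Polynomial.coeff_C_mul, Polynomial.coeff_X_pow]
    congr 1
    simp only [eq_comm]
  rw [Finset.sum_congr rfl (fun ε _ => h5 ε), Finset.sum_filter]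
  apply Finset.sum_congr rfl
  intro ε _
  split_ifs <;> simp


lemma coeff_Eps_one : PowerSeries.coeff 1 Eps = 1 - Polynomial.X := by
  rw [Eps, PowerSeries.coeff_mk, Finset.sum_range_succ, Finset.sum_range_one]
  simp [PowerSeries.coeff_one, Fps, PowerSeries.coeff_mk]

end BSaux

lemma Wfun_eq_coeff (M N : ℕ) (hM : 1 ≤ M) :
    Wfun M N = (PowerSeries.coeff M Eps).coeff N := by
  rw [Eps, PowerSeries.coeff_mk, Polynomial.finset_sum_coeff]
  have hins : Finset.range (M + 1) = insert 0 (Finset.Icc 1 M) := by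
    ext x; simp; omega
  rw [hins, Finset.sum_insert (by simp)]
  have h0 : ((Polynomial.C (((0:ℕ).factorial : ℝ)⁻¹)
      * PowerSeries.coeff M (Fps ^ 0)).coeff N : ℝ) = 0 := by
    rw [pow_zero, PowerSeries.coeff_one, if_neg (by omega)]
    simp
  rw [h0, zero_add, Wfun]
  apply Finset.sum_congr rfl
  intro r _
  rw [Polynomial.coeff_C_mul, coeff_pow_pi', Polynomial.finset_sum_coeff, one_div]
  congr 1
  apply Finset.sum_congr rfl
  intro d hd
  rw [Finset.mem_filter, Fintype.mem_piFinset] at hd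
  have hd0 : ∀ i, d i ≠ 0 := by
    intro i
    have := hd.1 i
    rw [Finset.mem_Icc] at this
    omega
  rw [inner_coeff r d hd0 N]

/-- For every `M ≥ 2` and every `N` with `2 ≤ N ≤ M`, `W(M,N) = 0`. -/
theorem bombieri_sieve_stmt11 (M N : ℕ) (hM : 2 ≤ M) (hN2 : 2 ≤ N) (hNM : N ≤ M) :
    Wfun M N = 0 := by
  rw [Wfun_eq_coeff M N (by omega), coeff_Eps_stable M (by omega), coeff_Eps_one]
  rw [Polynomial.coeff_sub, Polynomial.coeff_one, Polynomial.coeff_X,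
    if_neg (by omega), if_neg (by omega)]
  ring
end BSaux
end

section
/- For all complex numbers x, y with |x| < 1/3 and |y| < 1/3, the double series ∑_{M=1}^{∞} ∑_{N=0}^{M} W(M,N) x^M y^N converges absolutely and equals (1−xy)/(1−x) − 1, which equals (1−y)·x/(1−x). -/
open Finset

namespace BombieriAux

open Polynomial

noncomputable def g (k : ℕ) : Polynomial ℝ :=
  Polynomial.C ((k : ℝ)⁻¹) * (1 - Polynomial.X ^ k)

def comp (r m : ℕ) : Finset (Fin r → ℕ) :=
  (Fintype.piFinset fun _ : Fin r => Finset.Icc 1 m).filter (fun d => ∑ i, d i = m)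

lemma mem_comp {r m : ℕ} {d : Fin r → ℕ} :
    d ∈ comp r m ↔ (∀ i, 1 ≤ d i) ∧ ∑ i, d i = m := by
  simp only [comp, mem_filter, Fintype.mem_piFinset, Finset.mem_Icc]
  constructor
  · rintro ⟨h1, h2⟩; exact ⟨fun i => (h1 i).1, h2⟩
  · rintro ⟨h1, h2⟩
    refine ⟨fun i => ⟨h1 i, ?_⟩, h2⟩
    calc d i ≤ ∑ j, d j := Finset.single_le_sum (fun j _ => Nat.zero_le _) (mem_univ i)
    _ = m := h2

lemma comp_eq_empty {r m : ℕ} (h : m < r) : comp r m = ∅ := by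
  ext d
  simp only [mem_comp, Finset.notMem_empty, iff_false, not_and]
  intro h1 h2
  have : r ≤ ∑ i, d i := by
    calc r = ∑ _i : Fin r, 1 := by simp
    _ ≤ ∑ i, d i := Finset.sum_le_sum fun i _ => h1 i
  omega

lemma comp_zero {m : ℕ} (hm : 1 ≤ m) : comp 0 m = ∅ := by
  ext d
  simp only [mem_comp, Finset.notMem_empty, iff_false, not_and]
  intro _
  simp only [Finset.univ_eq_empty, Finset.sum_empty]
  omega

lemma comp_zero_zero : comp 0 0 = {(fun _ => 1 : Fin 0 → ℕ)} := by
  ext d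
  simp only [mem_comp, Finset.mem_singleton]
  constructor
  · intro _; exact funext fun i => i.elim0
  · intro _; exact ⟨fun i => i.elim0, by simp⟩

noncomputable def cf (m : ℕ) : Polynomial ℝ :=
  ∑ s ∈ range (m + 1), ((s.factorial : ℝ)⁻¹) • ∑ d ∈ comp s m, ∏ i, g (d i)

lemma cf_zero : cf 0 = 1 := by
  rw [cf]
  rw [show (0:ℕ)+1 = 1 from rfl, range_one, Finset.sum_singleton, comp_zero_zero]
  simp

lemma cf_eq {m T : ℕ} (h : m + 1 ≤ T) :
    cf m = ∑ s ∈ range T, ((s.factorial : ℝ)⁻¹) • ∑ d ∈ comp s m, ∏ i, g (d i) := by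
  rw [cf]
  apply Finset.sum_subset (Finset.range_subset_range.2 h)
  intro s hs hs'
  simp only [Finset.mem_range, not_lt] at hs'
  rw [comp_eq_empty (by omega)]
  simp

lemma smul_g {k : ℕ} (hk : 1 ≤ k) : (k : ℝ) • g k = 1 - Polynomial.X ^ k := by
  have hk' : (k : ℝ) ≠ 0 := Nat.cast_ne_zero.2 (by omega)
  rw [g, Polynomial.smul_eq_C_mul, ← mul_assoc, ← Polynomial.C_mul,
    mul_inv_cancel₀ hk', Polynomial.C_1, one_mul]

lemma sum_comp_smul_eq {s m : ℕ} (i j : Fin s) :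
    ∑ d ∈ comp s m, ((d i : ℝ)) • ∏ t, g (d t)
      = ∑ d ∈ comp s m, ((d j : ℝ)) • ∏ t, g (d t) := by
  apply Finset.sum_equiv ((Equiv.swap i j).arrowCongr (Equiv.refl ℕ))
  · intro d
    simp only [mem_comp, Equiv.arrowCongr_apply, Equiv.refl_apply, Function.comp]
    constructor
    · rintro ⟨h1, h2⟩
      refine ⟨fun t => h1 _, ?_⟩
      rw [← h2]
      exact Equiv.sum_comp (Equiv.swap i j) d
    · rintro ⟨h1, h2⟩
      refine ⟨fun t => by simpa using h1 ((Equiv.swap i j) t), ?_⟩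
      rw [← h2]
      exact (Equiv.sum_comp (Equiv.swap i j) d).symm
  · intro d hd
    simp only [Equiv.arrowCongr_apply, Equiv.refl_apply, Function.comp]
    have h1 : d ((Equiv.swap i j).symm j) = d i := by
      simp [Equiv.swap_apply_right]
    rw [h1]
    congr 1
    exact (Equiv.prod_comp (Equiv.swap i j) (fun t => g (d t))).symm

lemma sum_comp_succ (r m : ℕ) :
    ∑ d ∈ comp (r + 1) m, ((d (Fin.last r) : ℝ)) • ∏ t, g (d t)
      = ∑ k ∈ Icc 1 m, (1 - Polynomial.X ^ k) * ∑ d ∈ comp r (m - k), ∏ t, g (d t) := by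
  have hrhs : ∀ k ∈ Icc 1 m, (1 - Polynomial.X ^ k) * ∑ d ∈ comp r (m - k), ∏ t, g (d t)
      = ∑ d ∈ comp r (m - k), (k : ℝ) • (g k * ∏ t, g (d t)) := by
    intro k hk
    have hk1 : 1 ≤ k := (Finset.mem_Icc.1 hk).1
    rw [Finset.mul_sum]
    refine Finset.sum_congr rfl fun d _ => ?_
    rw [← smul_g hk1, smul_mul_assoc]
  rw [Finset.sum_congr rfl hrhs, Finset.sum_sigma']
  refine Finset.sum_bij' (fun d _ => (⟨d (Fin.last r), Fin.init d⟩ :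
      (k : ℕ) × (Fin r → ℕ))) (fun p _ => Fin.snoc p.2 p.1) ?_ ?_ ?_ ?_ ?_
  · intro d hd
    rw [mem_comp] at hd
    obtain ⟨h1, h2⟩ := hd
    have hle : d (Fin.last r) ≤ m := h2 ▸
      Finset.single_le_sum (fun t _ => Nat.zero_le _) (mem_univ _)
    refine Finset.mem_sigma.2 ⟨Finset.mem_Icc.2 ⟨h1 _, hle⟩, mem_comp.2 ⟨fun t => h1 _, ?_⟩⟩
    have hs : (∑ t : Fin r, d t.castSucc) + d (Fin.last r) = m := by
      rw [← Fin.sum_univ_castSucc, h2]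
    have heq : ∑ t : Fin r, Fin.init d t = ∑ t : Fin r, d t.castSucc := rfl
    rw [heq]
    exact Nat.eq_sub_of_add_eq hs
  · intro p hp
    rw [Finset.mem_sigma, Finset.mem_Icc, mem_comp] at hp
    obtain ⟨⟨hk1, hk2⟩, h1, h2⟩ := hp
    refine mem_comp.2 ⟨?_, ?_⟩
    · intro t
      refine Fin.lastCases ?_ ?_ t
      · simpa using hk1
      · intro t'; simpa using h1 t'
    · rw [Fin.sum_univ_castSucc]
      simp only [Fin.snoc_castSucc, Fin.snoc_last]
      omega
  · intro d hd
    exact Fin.snoc_init_self d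
  · rintro ⟨k, d'⟩ hp
    simp [Fin.snoc_last, Fin.init_snoc]
  · intro d hd
    simp only [Fin.snoc_last]
    congr 1
    rw [Fin.prod_univ_castSucc, mul_comm]
    rfl

lemma cf_rec {M : ℕ} (hM : 1 ≤ M) :
    (M : ℝ) • cf M = ∑ k ∈ Icc 1 M, (1 - Polynomial.X ^ k) * cf (M - k) := by
  have step1 : ∀ s : ℕ, (M : ℝ) • ∑ d ∈ comp s M, ∏ t, g (d t)
      = ∑ i : Fin s, ∑ d ∈ comp s M, ((d i : ℝ)) • ∏ t, g (d t) := by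
    intro s
    rw [Finset.smul_sum, Finset.sum_comm]
    refine Finset.sum_congr rfl fun d hd => ?_
    rw [← Finset.sum_smul]
    congr 1
    have h2 := (mem_comp.1 hd).2
    rw [← h2]
    push_cast
    rfl
  have step2 : ∀ r : ℕ, ∑ i : Fin (r + 1), ∑ d ∈ comp (r + 1) M, ((d i : ℝ)) • ∏ t, g (d t)
      = (r + 1 : ℕ) • ∑ k ∈ Icc 1 M,
          (1 - Polynomial.X ^ k) * ∑ d ∈ comp r (M - k), ∏ t, g (d t) := by
    intro r
    rw [← sum_comp_succ]
    rw [Finset.sum_congr rfl (fun i _ => sum_comp_smul_eq i (Fin.last r))]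
    rw [Finset.sum_const, card_univ, Fintype.card_fin]
  rw [cf, Finset.smul_sum]
  have hterm : ∀ s ∈ range (M + 1),
      (M : ℝ) • (((s.factorial : ℝ)⁻¹) • ∑ d ∈ comp s M, ∏ t, g (d t))
      = ((s.factorial : ℝ)⁻¹) • ∑ i : Fin s, ∑ d ∈ comp s M, ((d i : ℝ)) • ∏ t, g (d t) := by
    intro s _
    rw [smul_comm, step1]
  rw [Finset.sum_congr rfl hterm]
  rw [Finset.sum_range_succ']
  have h0 : ((Nat.factorial 0 : ℝ)⁻¹) • ∑ i : Fin 0, ∑ d ∈ comp 0 M, ((d i : ℝ)) • ∏ t, g (d t)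
      = 0 := by
    simp
  rw [h0, add_zero]
  have hterm2 : ∀ r ∈ range M,
      ((Nat.factorial (r + 1) : ℝ)⁻¹) • ∑ i : Fin (r + 1), ∑ d ∈ comp (r + 1) M,
          ((d i : ℝ)) • ∏ t, g (d t)
      = ∑ k ∈ Icc 1 M, (1 - Polynomial.X ^ k) *
          (((Nat.factorial r : ℝ)⁻¹) • ∑ d ∈ comp r (M - k), ∏ t, g (d t)) := by
    intro r _
    rw [step2, ← Nat.cast_smul_eq_nsmul ℝ, smul_smul]
    have hfac : ((Nat.factorial (r + 1) : ℝ)⁻¹) * ((r : ℝ) + 1) = (Nat.factorial r : ℝ)⁻¹ := by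
      rw [Nat.factorial_succ]
      push_cast
      rw [mul_comm ((r : ℝ) + 1)]
      rw [mul_inv]
      field_simp
    push_cast
    rw [hfac, Finset.smul_sum]
    refine Finset.sum_congr rfl fun k _ => ?_
    rw [mul_smul_comm]
  rw [Finset.sum_congr rfl hterm2, Finset.sum_comm]
  refine Finset.sum_congr rfl fun k hk => ?_
  rw [← Finset.mul_sum]
  congr 1
  have hk1 := (Finset.mem_Icc.1 hk).1
  rw [cf_eq (show M - k + 1 ≤ M by omega)]

lemma cf_eq_one_sub_X : ∀ {M : ℕ}, 1 ≤ M → cf M = 1 - Polynomial.X := by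
  intro M
  induction M using Nat.strong_induction_on with
  | _ M ih =>
  intro hM
  have hrec := cf_rec hM
  have hval : ∀ k ∈ Icc 1 M, (1 - Polynomial.X ^ k) * cf (M - k)
      = (1 - Polynomial.X ^ k) * (1 - Polynomial.X)
        + (if k = M then (1 - Polynomial.X ^ k) * Polynomial.X else 0) := by
    intro k hk
    rw [Finset.mem_Icc] at hk
    by_cases h : k = M
    · subst h
      rw [if_pos rfl, Nat.sub_self, cf_zero]
      ring
    · rw [ih (M - k) (by omega) (by omega), if_neg h, add_zero]
  rw [Finset.sum_congr rfl hval, Finset.sum_add_distrib] at hrec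
  have h2 : ∑ k ∈ Icc 1 M, (if k = M then ((1 : Polynomial ℝ) - Polynomial.X ^ k) * Polynomial.X else 0)
      = ((1 : Polynomial ℝ) - Polynomial.X ^ M) * Polynomial.X := by
    rw [Finset.sum_ite_eq' (Icc 1 M) M
      (fun k => ((1 : Polynomial ℝ) - Polynomial.X ^ k) * Polynomial.X)]
    rw [if_pos (Finset.mem_Icc.2 ⟨hM, le_refl M⟩)]
  rw [h2, ← Finset.sum_mul] at hrec
  have hsum1 : ∑ k ∈ Icc 1 M, ((1 : Polynomial ℝ) - Polynomial.X ^ k)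
      = Polynomial.C (M : ℝ)
        - Polynomial.X * ∑ i ∈ range M, Polynomial.X ^ i := by
    rw [Finset.sum_sub_distrib, Finset.sum_const, Nat.card_Icc]
    congr 1
    · simp [Polynomial.C_eq_natCast]
    · rw [← Finset.Ico_add_one_right_eq_Icc, Finset.sum_Ico_eq_sum_range]
      rw [show M + 1 - 1 = M by omega]
      rw [Finset.mul_sum]
      refine Finset.sum_congr rfl fun i _ => ?_
      rw [pow_add, pow_one]
  rw [hsum1] at hrec
  have hG := geom_sum_mul (Polynomial.X : Polynomial ℝ) M
  have hsmul : (M : ℝ) • cf M = Polynomial.C (M : ℝ) * cf M := Polynomial.smul_eq_C_mul _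
  rw [hsmul] at hrec
  have hkey : Polynomial.C (M : ℝ) * cf M = Polynomial.C (M : ℝ) * (1 - Polynomial.X) := by
    rw [hrec]
    linear_combination (Polynomial.X : Polynomial ℝ) * hG
  have hMne : (Polynomial.C (M : ℝ)) ≠ 0 := by
    simp only [ne_eq, Polynomial.C_eq_zero, Nat.cast_eq_zero]
    omega
  exact mul_left_cancel₀ hMne hkey

lemma prod_one_sub_X_pow {r : ℕ} (d : Fin r → ℕ) :
    (∏ i, ((1 : Polynomial ℝ) - Polynomial.X ^ (d i)))
      = ∑ ε ∈ Fintype.piFinset fun _ : Fin r => ({0, 1} : Finset ℕ),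
          Polynomial.C ((-1 : ℝ) ^ (∑ i, ε i)) * Polynomial.X ^ (∑ i, ε i * d i) := by
  have hexp : ∀ k : ℕ, ((1 : Polynomial ℝ) - Polynomial.X ^ k)
      = ∑ e ∈ ({0, 1} : Finset ℕ), Polynomial.C ((-1 : ℝ) ^ e) * Polynomial.X ^ (e * k) := by
    intro k
    rw [Finset.sum_pair (by norm_num : (0:ℕ) ≠ 1)]
    simp [sub_eq_add_neg]
  calc (∏ i, ((1 : Polynomial ℝ) - Polynomial.X ^ (d i)))
      = ∏ i, ∑ e ∈ ({0, 1} : Finset ℕ),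
          Polynomial.C ((-1 : ℝ) ^ e) * Polynomial.X ^ (e * d i) := by
        exact Finset.prod_congr rfl fun i _ => hexp (d i)
    _ = ∑ ε ∈ Fintype.piFinset fun _ : Fin r => ({0, 1} : Finset ℕ),
          ∏ i, Polynomial.C ((-1 : ℝ) ^ (ε i)) * Polynomial.X ^ (ε i * d i) := by
        rw [Finset.prod_univ_sum]
    _ = _ := by
        refine Finset.sum_congr rfl fun ε _ => ?_
        rw [Finset.prod_mul_distrib]
        congr 1
        · rw [← Finset.prod_pow_eq_pow_sum, map_prod]
        · rw [Finset.prod_pow_eq_pow_sum]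

lemma Wfun_eq {M : ℕ} (hM : 1 ≤ M) (N : ℕ) : Wfun M N = (cf M).coeff N := by
  rw [cf_eq (show M + 1 ≤ M + 1 from le_refl _)] -- keep as is
  rw [Polynomial.finset_sum_coeff]
  rw [Wfun]
  rw [show range (M + 1) = insert 0 (Icc 1 M) by
    ext s
    simp only [Finset.mem_range, Finset.mem_insert, Finset.mem_Icc]
    omega]
  rw [Finset.sum_insert (by simp)]
  have hz : (((Nat.factorial 0 : ℝ)⁻¹) • ∑ d ∈ comp 0 M, ∏ i, g (d i)).coeff N = 0 := by
    rw [comp_zero hM]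
    simp
  rw [hz, zero_add]
  refine Finset.sum_congr rfl fun r hr => ?_
  rw [Polynomial.coeff_smul, smul_eq_mul, one_div]
  congr 1
  have hinner : ∀ d ∈ comp r M, (∏ i, g (d i))
      = Polynomial.C (∏ i, ((d i : ℝ))⁻¹) *
          ∑ ε ∈ Fintype.piFinset fun _ : Fin r => ({0, 1} : Finset ℕ),
            Polynomial.C ((-1 : ℝ) ^ (∑ i, ε i)) * Polynomial.X ^ (∑ i, ε i * d i) := by
    intro d _
    rw [← prod_one_sub_X_pow]
    simp only [g]
    rw [Finset.prod_mul_distrib, map_prod]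
  rw [Polynomial.finset_sum_coeff]
  refine (Finset.sum_congr rfl fun d hd => ?_).symm
  rw [hinner d hd, Polynomial.coeff_C_mul, Finset.prod_inv_distrib]
  congr 1
  rw [Polynomial.finset_sum_coeff, Finset.sum_filter]
  refine (Finset.sum_congr rfl fun ε _ => ?_).symm
  rw [Polynomial.coeff_C_mul, Polynomial.coeff_X_pow]
  by_cases h : ∑ i, ε i * d i = N
  · rw [if_pos h, if_pos h.symm, mul_one]
  · rw [if_neg h, if_neg (fun hh => h hh.symm), mul_zero]

lemma Wfun_val {M : ℕ} (hM : 1 ≤ M) (N : ℕ) :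
    Wfun M N = if N = 0 then 1 else if N = 1 then -1 else 0 := by
  rw [Wfun_eq hM, cf_eq_one_sub_X hM]
  rcases N with _ | _ | n
  · simp
  · simp [Polynomial.coeff_one]
  · simp [Polynomial.coeff_one, Polynomial.coeff_X]

end BombieriAux

/-- For `x, y ∈ ℂ` with `|x| < 1/3`, `|y| < 1/3`, the double series
`∑_{M ≥ 1} ∑_{N=0}^{M} W(M,N) x^M y^N` converges absolutely and equals
`(1−xy)/(1−x) − 1`, which equals `(1−y)·x/(1−x)`. -/


theorem bombieri_sieve_stmt12 (x y : ℂ) (hx : ‖x‖ < 1 / 3)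
    (hy : ‖y‖ < 1 / 3) :
    Summable (fun M : ℕ =>
      ∑ N ∈ Finset.range (M + 2), ‖((Wfun (M + 1) N : ℝ) : ℂ) * x ^ (M + 1) * y ^ N‖) ∧
    (∑' M : ℕ, ∑ N ∈ Finset.range (M + 2), ((Wfun (M + 1) N : ℝ) : ℂ) * x ^ (M + 1) * y ^ N)
      = (1 - x * y) / (1 - x) - 1 ∧
    (1 - x * y) / (1 - x) - 1 = (1 - y) * x / (1 - x) := by
  have hx1 : ‖x‖ < 1 := by
    linarith
  have hxne : (1 : ℂ) - x ≠ 0 := by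
    intro h
    rw [sub_eq_zero] at h
    rw [← h] at hx1
    simp at hx1
  have hsub : ∀ M : ℕ, ({0, 1} : Finset ℕ) ⊆ Finset.range (M + 2) := by
    intro M n hn
    simp only [Finset.mem_insert, Finset.mem_singleton] at hn
    rcases hn with h | h <;> simp [h]
  have hout : ∀ N : ℕ, N ∉ ({0, 1} : Finset ℕ) → ((Wfun 1 N : ℝ) : ℂ) = 0 ∧
      ∀ M : ℕ, Wfun (M + 1) N = 0 := by
    intro N hN
    simp only [Finset.mem_insert, Finset.mem_singleton, not_or] at hN
    constructor
    · rw [BombieriAux.Wfun_val (by omega) N, if_neg hN.1, if_neg hN.2]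
      simp
    · intro M
      rw [BombieriAux.Wfun_val (by omega) N, if_neg hN.1, if_neg hN.2]
  have hW0 : ∀ M : ℕ, Wfun (M + 1) 0 = 1 := fun M => by
    rw [BombieriAux.Wfun_val (by omega) 0]; simp
  have hW1 : ∀ M : ℕ, Wfun (M + 1) 1 = -1 := fun M => by
    rw [BombieriAux.Wfun_val (by omega) 1]; simp
  have hsum : ∀ M : ℕ,
      ∑ N ∈ Finset.range (M + 2), ((Wfun (M + 1) N : ℝ) : ℂ) * x ^ (M + 1) * y ^ N
        = x ^ (M + 1) * (1 - y) := by
    intro M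
    rw [← Finset.sum_subset (hsub M) (fun N _ hN => by
      rw [(hout N hN).2 M]; simp)]
    rw [Finset.sum_pair (by norm_num : (0 : ℕ) ≠ 1), hW0 M, hW1 M]
    push_cast
    ring
  have hnorm : ∀ M : ℕ,
      ∑ N ∈ Finset.range (M + 2), ‖((Wfun (M + 1) N : ℝ) : ℂ) * x ^ (M + 1) * y ^ N‖
        = ‖x‖ ^ (M + 1) * (1 + ‖y‖) := by
    intro M
    rw [← Finset.sum_subset (hsub M) (fun N _ hN => by
      rw [(hout N hN).2 M]; simp)]
    rw [Finset.sum_pair (by norm_num : (0 : ℕ) ≠ 1), hW0 M, hW1 M]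
    simp only [norm_mul, norm_pow]
    push_cast
    simp only [norm_one, norm_neg, Complex.norm_real]
    norm_num
    ring
  have hthird : (1 - x * y) / (1 - x) - 1 = (1 - y) * x / (1 - x) := by
    field_simp
    ring
  refine ⟨?_, ?_, hthird⟩
  · have hs : Summable (fun M : ℕ => (‖x‖ * (1 + ‖y‖)) * ‖x‖ ^ M) :=
      (summable_geometric_of_lt_one (norm_nonneg x) hx1).mul_left _
    refine hs.congr fun M => ?_
    rw [hnorm M, pow_succ]
    ring
  · rw [tsum_congr hsum]
    have h1 : ∑' M : ℕ, x ^ (M + 1) * (1 - y) = (∑' M : ℕ, x ^ (M + 1)) * (1 - y) :=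
      tsum_mul_right
    have h2 : ∑' M : ℕ, x ^ (M + 1) = x * ∑' M : ℕ, x ^ M := by
      rw [← tsum_mul_left]
      exact tsum_congr fun M => by rw [pow_succ]; ring
    rw [h1, h2, tsum_geometric_of_norm_lt_one hx1, hthird]
    field_simp
end

section
/- Let 0 < ν < 1, ϖ > 0 with ν + ϖ < 1, c_1 > 0, x_0 ≥ 100, and let (a_n)_{n≥1} be a sequence with 0 ≤ a_n ≤ 2 for all n. Suppose there is a constant C such that for every j ≥ 0 and every integer d with 1 ≤ d ≤ x_j^{1−ϖ}, one has |∑_{n ∈ I_j, d|n} a_n − K_j/d| ≤ C·(K_j/d)·e^{−c_1·√(log x_j)}. Then there is a constant C′ (depending on ν, ϖ, c_1, C, x_0) such that for all x ≥ x_0 and all integers d with 1 ≤ d ≤ x^ν, |∑_{n ≤ x, d|n} a_n − x/d| ≤ C′·(x/d)·e^{−(c_1/2)·√(log x)}. In particular, for every B > 0 there is a constant C_B such that ∑_{d ≤ x^ν} |∑_{n≤x, d|n} a_n − x/d| ≤ C_B·x·(log x)^{−B} for all x ≥ 2 (condition R(ν)). -/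
open Finset

lemma card_filter_dvd_Ioc_le (a b d : ℕ) (hd : 1 ≤ d) (hab : a ≤ b) :
    (((Finset.Ioc a b).filter (fun n => d ∣ n)).card : ℝ) ≤ ((b : ℝ) - a) / d + 1 := by
  have hd0 : 0 < d := hd
  have hdR : (0:ℝ) < d := by exact_mod_cast hd0
  have h1 : ((Finset.Ioc a b).filter (fun n => d ∣ n)).card ≤ (Finset.Ioc (a/d) (b/d)).card := by
    apply Finset.card_le_card_of_injOn (fun n => n / d)
    · intro n hn
      simp only [Finset.coe_filter, Finset.mem_coe, Set.mem_setOf_eq, Finset.mem_filter, Finset.mem_Ioc] at hn ⊢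
      obtain ⟨⟨han, hnb⟩, hdvd⟩ := hn
      exact ⟨Nat.div_lt_div_of_lt_of_dvd hdvd han, Nat.div_le_div_right hnb⟩
    · intro n₁ h₁ n₂ h₂ h
      simp only [Finset.coe_filter, Set.mem_setOf_eq, Finset.mem_Ioc] at h₁ h₂
      have e₁ := Nat.div_mul_cancel h₁.2
      have e₂ := Nat.div_mul_cancel h₂.2
      simp only at h
      rw [← e₁, ← e₂, h]
  have h2 : (Finset.Ioc (a/d) (b/d)).card = b/d - a/d := Nat.card_Ioc _ _
  have hab' : a / d ≤ b / d := Nat.div_le_div_right hab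
  have h3 : ((b/d - a/d : ℕ) : ℝ) = ((b/d : ℕ) : ℝ) - ((a/d : ℕ) : ℝ) := Nat.cast_sub hab'
  have hb' : (d:ℝ) * ((b/d : ℕ) : ℝ) ≤ (b:ℝ) := by
    have := Nat.div_mul_le_self b d
    exact_mod_cast (by exact_mod_cast Nat.mul_comm (b/d) d ▸ this : ((d * (b/d) : ℕ):ℝ) ≤ (b:ℝ))
  have ha' : (a:ℝ) - d < (d:ℝ) * ((a/d : ℕ) : ℝ) := by
    have hmod := Nat.mod_lt a hd0
    have hdm := Nat.div_add_mod a d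
    have : (d:ℝ) * ((a/d : ℕ):ℝ) + ((a % d : ℕ):ℝ) = (a:ℝ) := by exact_mod_cast hdm
    have hm : ((a % d : ℕ):ℝ) < (d:ℝ) := by exact_mod_cast hmod
    linarith
  have hcard : (((Finset.Ioc a b).filter (fun n => d ∣ n)).card : ℝ)
      ≤ ((b/d : ℕ) : ℝ) - ((a/d : ℕ) : ℝ) := by
    rw [← h3, ← h2]; exact_mod_cast h1
  rw [div_add' _ _ _ (ne_of_gt hdR), le_div_iff₀ hdR]
  nlinarith [hcard]

lemma rpow_le_const_mul_self_exp (c x e : ℝ) (hc1 : c < 1) (hx : 1 ≤ x) :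
    x ^ c ≤ Real.exp (e^2 / (4*(1-c))) * (x * Real.exp (-e * Real.sqrt (Real.log x))) := by
  have hx0 : 0 < x := by linarith
  have hL : 0 ≤ Real.log x := Real.log_nonneg hx
  set L := Real.log x with hLdef
  set s := Real.sqrt L with hsdef
  have hs0 : 0 ≤ s := Real.sqrt_nonneg _
  have hs2 : s ^ 2 = L := Real.sq_sqrt hL
  have hb : (0:ℝ) < 1 - c := by linarith
  have hkey : c * L ≤ e^2 / (4*(1-c)) + L + (-e * s) := by
    have h4 : (0:ℝ) < 4*(1-c) := by linarith
    have h5 : e*s - (1-c)*L ≤ e^2 / (4*(1-c)) := by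
      rw [le_div_iff₀ h4, ← hs2]
      nlinarith [sq_nonneg (2*(1-c)*s - e)]
    linarith
  calc x ^ c = Real.exp (c * L) := by rw [Real.rpow_def_of_pos hx0, hLdef, mul_comm]
    _ ≤ Real.exp (e^2 / (4*(1-c)) + L + (-e * s)) := Real.exp_le_exp.mpr hkey
    _ = Real.exp (e^2 / (4*(1-c))) * (x * Real.exp (-e * s)) := by
        rw [Real.exp_add, Real.exp_add, Real.exp_log hx0, mul_assoc]

set_option maxHeartbeats 2000000 in
lemma bombieri_part1 (ν ϖ c1 x0 : ℝ)
    (hν0 : 0 < ν) (hν1 : ν < 1) (hϖ : 0 < ϖ) (hνϖ : ν + ϖ < 1)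
    (hc1 : 0 < c1) (hx0 : 100 ≤ x0)
    (X : ℕ → ℝ) (hX100 : ∀ j, 100 ≤ X j) (hXmono : Monotone X)
    (hX2 : ∀ j, X (j+1) ≤ 2 * X j) (hXunbdd : ∀ M : ℝ, ∃ j, M < X j)
    (hXrec : ∀ j : ℕ, X (j + 1) = X j * (1 + Real.exp (-c1 * Real.sqrt (Real.log (X j)))))
    (hX0 : X 0 = x0)
    (a : ℕ → ℝ) (ha : ∀ n, 0 ≤ a n ∧ a n ≤ 2)
    (C : ℝ)
    (hC : ∀ j : ℕ, ∀ d : ℕ, 1 ≤ d → (d : ℝ) ≤ X j ^ (1 - ϖ) →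
      |(∑ n ∈ (Finset.Ioc ⌊X j⌋₊ ⌊X (j + 1)⌋₊).filter (fun n => d ∣ n), a n)
          - ((Finset.Ioc ⌊X j⌋₊ ⌊X (j + 1)⌋₊).card : ℝ) / d|
        ≤ C * (((Finset.Ioc ⌊X j⌋₊ ⌊X (j + 1)⌋₊).card : ℝ) / d) *
            Real.exp (-c1 * Real.sqrt (Real.log (X j)))) :
    ∀ x : ℝ, x0 ≤ x → ∀ d : ℕ, 1 ≤ d → (d : ℝ) ≤ x ^ ν →
      |(∑ n ∈ (Finset.Icc 1 ⌊x⌋₊).filter (fun n => d ∣ n), a n) - x / d|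
        ≤ ((3*x0+3)*Real.exp ((c1/2)^2/(4*(1-(0:ℝ))))
            + 9*Real.exp ((c1/2)^2/(4*(1-((ν/(1-ϖ)+1)/2))))
            + 4*Real.exp ((c1/2)^2/(4*(1-ν))) + (3+|C|))
          * (x / d) * Real.exp (-(c1 / 2) * Real.sqrt (Real.log x)) := by
  intro x hx d hd1 hdx
  -- basic positivity facts
  set θ : ℝ := (ν/(1-ϖ)+1)/2 with hθdef
  set C' : ℝ := (3*x0+3)*Real.exp ((c1/2)^2/(4*(1-(0:ℝ))))
      + 9*Real.exp ((c1/2)^2/(4*(1-θ))) + 4*Real.exp ((c1/2)^2/(4*(1-ν))) + (3+|C|) with hC'def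
  have hϖ1 : 0 < 1 - ϖ := by linarith
  have hθhalf : 1/2 ≤ θ := by
    rw [hθdef]
    have : 0 ≤ ν / (1-ϖ) := by positivity
    linarith
  have hθ1 : θ < 1 := by
    rw [hθdef]
    have : ν / (1-ϖ) < 1 := (div_lt_one hϖ1).mpr (by linarith)
    linarith
  have hνθ : ν ≤ θ * (1-ϖ) := by
    have h : θ * (1-ϖ) = (ν + (1-ϖ))/2 := by rw [hθdef]; field_simp
    rw [h]; linarith
  have hx100 : (100:ℝ) ≤ x := le_trans hx0 hx
  have hx1 : (1:ℝ) ≤ x := by linarith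
  have hxpos : (0:ℝ) < x := by linarith
  set L : ℝ := Real.log x with hLdef
  have hL0 : 0 ≤ L := Real.log_nonneg hx1
  set E : ℝ := Real.exp (-(c1 / 2) * Real.sqrt L) with hEdef
  have hE0 : 0 < E := Real.exp_pos _
  have hdR : (1:ℝ) ≤ (d:ℝ) := by exact_mod_cast hd1
  have hd0R : (0:ℝ) < (d:ℝ) := by linarith
  set y : ℝ := x ^ θ with hydef
  have hy1 : (1:ℝ) ≤ y := by
    rw [hydef]
    calc (1:ℝ) = x ^ (0:ℝ) := (Real.rpow_zero x).symm
      _ ≤ x ^ θ := Real.rpow_le_rpow_of_exponent_le hx1 (by linarith)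
  -- index J : last with X J ≤ x
  obtain ⟨jx, hjx⟩ := hXunbdd x
  have hexJ : ∃ j, x < X j := ⟨jx, hjx⟩
  set Jf := Nat.find hexJ with hJfdef
  have hJfspec : x < X Jf := Nat.find_spec hexJ
  have hJf0 : Jf ≠ 0 := by
    intro h
    rw [h, hX0] at hJfspec
    linarith
  set J := Jf - 1 with hJdef
  have hJsucc : J + 1 = Jf := by omega
  have hJ1 : X J ≤ x := by
    have := Nat.find_min hexJ (show J < Jf by omega)
    push_neg at this
    exact this
  have hJ2 : x < X (J+1) := by rw [hJsucc]; exact hJfspec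
  -- index F : first with y ≤ X F
  have hexF : ∃ j, y ≤ X j := (hXunbdd y).imp (fun _ h => h.le)
  set F := Nat.find hexF with hFdef
  have hFspec : y ≤ X F := Nat.find_spec hexF
  set j0 := min F J with hj0def
  have hj0J : j0 ≤ J := min_le_right _ _
  have hj0x : X j0 ≤ x := le_trans (hXmono hj0J) hJ1
  have hmid : ∀ j, j0 ≤ j → j < J → y ≤ X j := by
    intro j hj hjJ
    have hFj : F ≤ j := by
      by_cases hFJ : F ≤ J
      · have : j0 = F := min_eq_left hFJ
        omega
      · have : j0 = J := min_eq_right (by omega)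
        omega
    exact le_trans hFspec (hXmono hFj)
  have hXj0small : X j0 ≤ x0 + 2*y := by
    by_cases h0 : j0 = 0
    · rw [h0, hX0]; linarith
    · have h1 : j0 - 1 < F := by
        have : j0 ≤ F := min_le_left _ _
        omega
      have h2 := Nat.find_min hexF h1
      push_neg at h2
      have h3 : j0 - 1 + 1 = j0 := by omega
      have h4 := hX2 (j0 - 1)
      rw [h3] at h4
      linarith
  -- floors
  set k0 := ⌊X j0⌋₊ with hk0def
  set kJ := ⌊X J⌋₊ with hkJdef
  set kx := ⌊x⌋₊ with hkxdef
  have hk0kJ : k0 ≤ kJ := Nat.floor_le_floor (hXmono hj0J)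
  have hkJx : kJ ≤ kx := Nat.floor_le_floor hJ1
  have hXj0pos : (0:ℝ) ≤ X j0 := by linarith [hX100 j0]
  have hk0le : (k0:ℝ) ≤ X j0 := Nat.floor_le hXj0pos
  have hkJle : (kJ:ℝ) ≤ X J := Nat.floor_le (by linarith [hX100 J])
  have hkJge : X J - 1 < (kJ:ℝ) := by
    have := Nat.lt_floor_add_one (X J)
    linarith
  have hkxle : (kx:ℝ) ≤ x := Nat.floor_le (le_of_lt hxpos)
  -- the indicator-weighted function
  set g : ℕ → ℝ := fun n => if d ∣ n then a n else 0 with hgdef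
  have hg0 : ∀ n, 0 ≤ g n := by
    intro n; rw [hgdef]; dsimp only
    split
    · exact (ha n).1
    · exact le_refl 0
  -- filter-sum = g-sum
  have hfg : ∀ a' b' : ℕ, ∑ n ∈ (Finset.Ioc a' b').filter (fun n => d ∣ n), a n
      = ∑ n ∈ Finset.Ioc a' b', g n := by
    intro a' b'
    rw [Finset.sum_filter]
  -- trivial bound on interval sums
  have htriv : ∀ a' b' : ℕ, a' ≤ b' → (0 ≤ ∑ n ∈ Finset.Ioc a' b', g n) ∧
      ((∑ n ∈ Finset.Ioc a' b', g n) * d ≤ 2*((b':ℝ) - a') + 2*d) := by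
    intro a' b' hab
    constructor
    · exact Finset.sum_nonneg (fun n _ => hg0 n)
    · have hle : (∑ n ∈ Finset.Ioc a' b', g n) ≤ 2*(((b':ℝ) - a')/d + 1) := by
        rw [← hfg]
        have hcard := card_filter_dvd_Ioc_le a' b' d hd1 hab
        have hsum : ∑ n ∈ (Finset.Ioc a' b').filter (fun n => d ∣ n), a n
            ≤ (((Finset.Ioc a' b').filter (fun n => d ∣ n)).card : ℝ) * 2 := by
          have := Finset.sum_le_card_nsmul ((Finset.Ioc a' b').filter (fun n => d ∣ n)) a 2
            (fun n _ => (ha n).2)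
          simpa [nsmul_eq_mul] using this
        have h2 := mul_le_mul_of_nonneg_right hcard (by norm_num : (0:ℝ) ≤ 2)
        linarith
      have h1 := mul_le_mul_of_nonneg_right hle (le_of_lt hd0R)
      have h2 : 2*(((b':ℝ) - a')/d + 1)*d = 2*((b':ℝ) - a') + 2*d := by
        field_simp
      rw [h2] at h1
      exact h1
  -- decomposition of the full sum
  have hIcc : Finset.Icc 1 kx = Finset.Ioc 0 kx := by
    ext n; simp [Finset.mem_Icc, Finset.mem_Ioc]; omega
  set S : ℝ := ∑ n ∈ (Finset.Icc 1 kx).filter (fun n => d ∣ n), a n with hSdef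
  set A : ℝ := ∑ n ∈ Finset.Ioc 0 k0, g n with hAdef
  set Bsum : ℝ := ∑ n ∈ Finset.Ioc k0 kJ, g n with hBdef
  set Cc : ℝ := ∑ n ∈ Finset.Ioc kJ kx, g n with hCcdef
  have hdecomp : S = A + Bsum + Cc := by
    rw [hSdef, hAdef, hBdef, hCcdef, hIcc, hfg,
      ← Finset.sum_Ioc_consecutive g (Nat.zero_le k0) (le_trans hk0kJ hkJx),
      ← Finset.sum_Ioc_consecutive g hk0kJ hkJx, add_assoc]
  -- middle telescoping
  have htele : ∀ b : ℕ, j0 ≤ b →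
      ∑ j ∈ Finset.Ico j0 b, (∑ n ∈ Finset.Ioc ⌊X j⌋₊ ⌊X (j+1)⌋₊, g n)
        = ∑ n ∈ Finset.Ioc ⌊X j0⌋₊ ⌊X b⌋₊, g n := by
    intro b hb
    induction b, hb using Nat.le_induction with
    | base => simp
    | succ b hb ih =>
      rw [Finset.sum_Ico_succ_top hb, ih,
        Finset.sum_Ioc_consecutive g (Nat.floor_le_floor (hXmono hb))
          (Nat.floor_le_floor (hXmono (Nat.le_succ b)))]
  have hBsum : Bsum = ∑ j ∈ Finset.Ico j0 J, (∑ n ∈ Finset.Ioc ⌊X j⌋₊ ⌊X (j+1)⌋₊, g n) := by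
    rw [htele J hj0J]
  -- cardinality telescoping
  have hKcast : ∀ j : ℕ, ((Finset.Ioc ⌊X j⌋₊ ⌊X (j+1)⌋₊).card : ℝ)
      = ((⌊X (j+1)⌋₊ : ℝ)) - ((⌊X j⌋₊ : ℝ)) := by
    intro j
    rw [Nat.card_Ioc]
    exact_mod_cast Nat.cast_sub (Nat.floor_le_floor (hXmono (Nat.le_succ j)))
  have hKsum : ∑ j ∈ Finset.Ico j0 J, ((Finset.Ioc ⌊X j⌋₊ ⌊X (j+1)⌋₊).card : ℝ)
      = (kJ:ℝ) - (k0:ℝ) := by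
    have h1 : ∀ j ∈ Finset.Ico j0 J, ((Finset.Ioc ⌊X j⌋₊ ⌊X (j+1)⌋₊).card : ℝ)
        = (fun i => ((⌊X i⌋₊ : ℝ))) (j+1) - (fun i => ((⌊X i⌋₊ : ℝ))) j := by
      intro j _; exact hKcast j
    rw [Finset.sum_congr rfl h1, Finset.sum_Ico_eq_sub _ hj0J,
      Finset.sum_range_sub (fun i => ((⌊X i⌋₊ : ℝ))), Finset.sum_range_sub (fun i => ((⌊X i⌋₊ : ℝ)))]
    simp [hk0def, hkJdef]
  -- uniform exponential comparison
  have hexpXle : ∀ j : ℕ, y ≤ X j →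
      Real.exp (-c1 * Real.sqrt (Real.log (X j))) ≤ E := by
    intro j hyXj
    rw [hEdef, Real.exp_le_exp]
    have hXjpos : (0:ℝ) < X j := by linarith [hX100 j]
    have hlog : θ * L ≤ Real.log (X j) := by
      have h1 : Real.log y ≤ Real.log (X j) := Real.log_le_log (by linarith [hy1]) hyXj
      rw [hydef, Real.log_rpow hxpos] at h1
      exact h1
    have hs1 : Real.sqrt L ≤ 2 * Real.sqrt (Real.log (X j)) := by
      have h4 : Real.sqrt 4 = 2 := by
        rw [show (4:ℝ) = 2^2 by norm_num, Real.sqrt_sq (by norm_num : (0:ℝ) ≤ 2)]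
      have hLθ : L ≤ 4 * Real.log (X j) := by
        have hh := mul_le_mul_of_nonneg_right hθhalf hL0
        linarith
      calc Real.sqrt L ≤ Real.sqrt (4 * Real.log (X j)) := Real.sqrt_le_sqrt hLθ
        _ = 2 * Real.sqrt (Real.log (X j)) := by
            rw [Real.sqrt_mul (by norm_num : (0:ℝ) ≤ 4), h4]
    have hh := mul_le_mul_of_nonneg_left hs1 (le_of_lt hc1)
    linarith
  -- per-interval bound on the middle sums
  have hmidbound : ∀ j ∈ Finset.Ico j0 J,
      |(∑ n ∈ Finset.Ioc ⌊X j⌋₊ ⌊X (j+1)⌋₊, g n)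
          - ((Finset.Ioc ⌊X j⌋₊ ⌊X (j+1)⌋₊).card : ℝ)/d|
        ≤ (|C| * E/d) * ((Finset.Ioc ⌊X j⌋₊ ⌊X (j+1)⌋₊).card : ℝ) := by
    intro j hj
    rw [Finset.mem_Ico] at hj
    have hyXj : y ≤ X j := hmid j hj.1 hj.2
    have hdXj : (d:ℝ) ≤ X j ^ (1-ϖ) := by
      calc (d:ℝ) ≤ x^ν := hdx
        _ ≤ x^(θ*(1-ϖ)) := Real.rpow_le_rpow_of_exponent_le hx1 hνθ
        _ = (x^θ)^(1-ϖ) := Real.rpow_mul (le_of_lt hxpos) θ (1-ϖ)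
        _ ≤ X j ^ (1-ϖ) := Real.rpow_le_rpow (by positivity) hyXj (by linarith)
    have h1 := hC j d hd1 hdXj
    rw [hfg] at h1
    have hcard0 : (0:ℝ) ≤ ((Finset.Ioc ⌊X j⌋₊ ⌊X (j+1)⌋₊).card : ℝ) := Nat.cast_nonneg _
    have h2 : C * (((Finset.Ioc ⌊X j⌋₊ ⌊X (j+1)⌋₊).card : ℝ)/d)
          * Real.exp (-c1 * Real.sqrt (Real.log (X j)))
        ≤ (|C| * E/d) * ((Finset.Ioc ⌊X j⌋₊ ⌊X (j+1)⌋₊).card : ℝ) := by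
      have hc' : C ≤ |C| := le_abs_self C
      have hEe := hexpXle j hyXj
      have hKd : (0:ℝ) ≤ ((Finset.Ioc ⌊X j⌋₊ ⌊X (j+1)⌋₊).card : ℝ)/d :=
        div_nonneg hcard0 (le_of_lt hd0R)
      calc C * (((Finset.Ioc ⌊X j⌋₊ ⌊X (j+1)⌋₊).card : ℝ)/d)
            * Real.exp (-c1 * Real.sqrt (Real.log (X j)))
          ≤ |C| * (((Finset.Ioc ⌊X j⌋₊ ⌊X (j+1)⌋₊).card : ℝ)/d)
            * Real.exp (-c1 * Real.sqrt (Real.log (X j))) := by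
            apply mul_le_mul_of_nonneg_right (mul_le_mul_of_nonneg_right hc' hKd)
              (Real.exp_pos _).le
        _ ≤ |C| * (((Finset.Ioc ⌊X j⌋₊ ⌊X (j+1)⌋₊).card : ℝ)/d) * E := by
            exact mul_le_mul_of_nonneg_left hEe (mul_nonneg (abs_nonneg C) hKd)
        _ = (|C| * E/d) * ((Finset.Ioc ⌊X j⌋₊ ⌊X (j+1)⌋₊).card : ℝ) := by ring
    exact h1.trans h2
  -- total middle bound
  have hM : |Bsum - ((kJ:ℝ)-(k0:ℝ))/d| ≤ (|C| * E/d) * ((kJ:ℝ)-(k0:ℝ)) := by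
    have h1 : Bsum - ((kJ:ℝ)-(k0:ℝ))/d
        = ∑ j ∈ Finset.Ico j0 J, ((∑ n ∈ Finset.Ioc ⌊X j⌋₊ ⌊X (j+1)⌋₊, g n)
            - ((Finset.Ioc ⌊X j⌋₊ ⌊X (j+1)⌋₊).card : ℝ)/d) := by
      rw [Finset.sum_sub_distrib, ← Finset.sum_div, hKsum, ← hBsum]
    rw [h1]
    calc |∑ j ∈ Finset.Ico j0 J, ((∑ n ∈ Finset.Ioc ⌊X j⌋₊ ⌊X (j+1)⌋₊, g n)
            - ((Finset.Ioc ⌊X j⌋₊ ⌊X (j+1)⌋₊).card : ℝ)/d)|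
        ≤ ∑ j ∈ Finset.Ico j0 J, |(∑ n ∈ Finset.Ioc ⌊X j⌋₊ ⌊X (j+1)⌋₊, g n)
            - ((Finset.Ioc ⌊X j⌋₊ ⌊X (j+1)⌋₊).card : ℝ)/d| := Finset.abs_sum_le_sum_abs _ _
      _ ≤ ∑ j ∈ Finset.Ico j0 J, (|C| * E/d) * ((Finset.Ioc ⌊X j⌋₊ ⌊X (j+1)⌋₊).card : ℝ) :=
          Finset.sum_le_sum hmidbound
      _ = (|C| * E/d) * ((kJ:ℝ)-(k0:ℝ)) := by rw [← Finset.mul_sum, hKsum]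
  -- gap bound
  have hgap : x - X J ≤ x*E + y := by
    by_cases hFJ : F ≤ J
    · have hyXJ : y ≤ X J := le_trans hFspec (hXmono hFJ)
      have h1 : X (J+1) - X J = X J * Real.exp (-c1 * Real.sqrt (Real.log (X J))) := by
        rw [hXrec J]; ring
      have h2 : X J * Real.exp (-c1 * Real.sqrt (Real.log (X J))) ≤ x * E :=
        mul_le_mul hJ1 (hexpXle J hyXJ) (Real.exp_pos _).le (le_of_lt hxpos)
      have h3 : x - X J ≤ X (J+1) - X J := by linarith [hJ2]
      linarith [hy1]
    · have hJF : J < F := not_le.mp hFJ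
      have h2 := Nat.find_min hexF hJF
      push_neg at h2
      have h3 := hX2 J
      linarith [hJ2, mul_nonneg (le_of_lt hxpos) hE0.le]
  -- multiplied-out component bounds
  have hA := htriv 0 k0 (Nat.zero_le _)
  have hCc := htriv kJ kx hkJx
  have hxE0 : (0:ℝ) ≤ x*E := mul_nonneg (le_of_lt hxpos) hE0.le
  have hk00 : (0:ℝ) ≤ (k0:ℝ) := Nat.cast_nonneg _
  have hA2 : A * d ≤ 2*x0 + 4*y + 2*(x^ν) := by
    have h1 := hA.2
    push_cast at h1
    linarith [hk0le, hXj0small, hdx]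
  have hCc2 : Cc * d ≤ 2*(x*E) + 2*y + 2 + 2*(x^ν) := by
    have h1 := hCc.2
    linarith [hkxle, hkJge, hgap, hdx]
  have hM2 : |Bsum - ((kJ:ℝ)-(k0:ℝ))/d| * d ≤ |C| * (x*E) := by
    have h1 := mul_le_mul_of_nonneg_right hM (le_of_lt hd0R)
    have h2 : ((|C| * E/d) * ((kJ:ℝ)-(k0:ℝ)))*d = |C| * E*((kJ:ℝ)-(k0:ℝ)) := by
      field_simp
    rw [h2] at h1
    have h3 : |C| * E*((kJ:ℝ)-(k0:ℝ)) ≤ |C| * E*x := by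
      apply mul_le_mul_of_nonneg_left _ (mul_nonneg (abs_nonneg C) hE0.le)
      linarith [hkJle, hJ1]
    calc |Bsum - ((kJ:ℝ)-(k0:ℝ))/d| * d ≤ |C| * E*((kJ:ℝ)-(k0:ℝ)) := h1
      _ ≤ |C| * E*x := h3
      _ = |C| * (x*E) := by ring
  have hD2 : |((kJ:ℝ)-(k0:ℝ))/d - x/d| * d ≤ x*E + 3*y + 1 + x0 := by
    have habs : ((kJ:ℝ)-(k0:ℝ))/d - x/d = -((x - (kJ:ℝ) + (k0:ℝ))/d) := by ring
    have hnum0 : (0:ℝ) ≤ x - (kJ:ℝ) + (k0:ℝ) := by linarith [hkJle, hJ1]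
    rw [habs, abs_neg, abs_of_nonneg (div_nonneg hnum0 (le_of_lt hd0R)),
      div_mul_cancel₀ _ (ne_of_gt hd0R)]
    linarith [hkJge, hgap, hk0le, hXj0small]
  -- triangle inequality assembly
  have htri : |S - x/d| ≤ A + |Bsum - ((kJ:ℝ)-(k0:ℝ))/d| + Cc
      + |((kJ:ℝ)-(k0:ℝ))/d - x/d| := by
    have hid : S - x/(d:ℝ) = A + (Bsum - ((kJ:ℝ)-(k0:ℝ))/d) + Cc
        + (((kJ:ℝ)-(k0:ℝ))/d - x/d) := by rw [hdecomp]; ring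
    rw [hid]
    have t1 := abs_add_le (A + (Bsum - ((kJ:ℝ)-(k0:ℝ))/d) + Cc) (((kJ:ℝ)-(k0:ℝ))/d - x/d)
    have t2 := abs_add_le (A + (Bsum - ((kJ:ℝ)-(k0:ℝ))/d)) Cc
    have t3 := abs_add_le A (Bsum - ((kJ:ℝ)-(k0:ℝ))/d)
    have hAabs : |A| = A := abs_of_nonneg hA.1
    have hCabs : |Cc| = Cc := abs_of_nonneg hCc.1
    linarith
  have htotal : |S - x/d| * d ≤ (3*x0+3) + 9*y + 4*(x^ν) + (3+|C|)*(x*E) := by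
    have h1 := mul_le_mul_of_nonneg_right htri (le_of_lt hd0R)
    have h2 : (A + |Bsum - ((kJ:ℝ)-(k0:ℝ))/d| + Cc + |((kJ:ℝ)-(k0:ℝ))/d - x/d|)*d
        = A*d + |Bsum - ((kJ:ℝ)-(k0:ℝ))/d| * d + Cc*d + |((kJ:ℝ)-(k0:ℝ))/d - x/d| * d := by
      ring
    rw [h2] at h1
    linarith [hA2, hCc2, hM2, hD2]
  -- rpow comparisons
  have k1 : (1:ℝ) ≤ Real.exp ((c1/2)^2/(4*(1-(0:ℝ)))) * (x*E) := by
    have h := rpow_le_const_mul_self_exp 0 x (c1/2) (by norm_num) hx1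
    rw [Real.rpow_zero, ← hLdef, ← hEdef] at h
    exact h
  have k2 : y ≤ Real.exp ((c1/2)^2/(4*(1-θ))) * (x*E) := by
    have h := rpow_le_const_mul_self_exp θ x (c1/2) hθ1 hx1
    rw [← hLdef, ← hEdef] at h
    rw [hydef]
    exact h
  have k3 : x^ν ≤ Real.exp ((c1/2)^2/(4*(1-ν))) * (x*E) := by
    have h := rpow_le_const_mul_self_exp ν x (c1/2) hν1 hx1
    rw [← hLdef, ← hEdef] at h
    exact h
  have hnum : (3*x0+3) + 9*y + 4*(x^ν) + (3+|C|)*(x*E) ≤ C' * (x*E) := by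
    have m1 := mul_le_mul_of_nonneg_left k1 (show (0:ℝ) ≤ 3*x0+3 by linarith)
    have m2 := mul_le_mul_of_nonneg_left k2 (show (0:ℝ) ≤ 9 by norm_num)
    have m3 := mul_le_mul_of_nonneg_left k3 (show (0:ℝ) ≤ 4 by norm_num)
    have hCe : C' * (x*E) = (3*x0+3)*(Real.exp ((c1/2)^2/(4*(1-(0:ℝ)))) * (x*E))
        + 9*(Real.exp ((c1/2)^2/(4*(1-θ))) * (x*E))
        + 4*(Real.exp ((c1/2)^2/(4*(1-ν))) * (x*E)) + (3+|C|)*(x*E) := by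
      rw [hC'def]; ring
    rw [hCe]
    linarith
  have hfin : |S - x/d| ≤ (C' * (x*E))/d := by
    rw [le_div_iff₀ hd0R]
    exact le_trans htotal hnum
  have hrw : (C' * (x*E))/d = C' * (x/d) * E := by ring
  rw [hrw] at hfin
  exact hfin


/-- Harmonic-sum bound. -/
lemma sum_inv_le_one_add_log (D : ℕ) :
    ∑ d ∈ Finset.Icc 1 D, (1:ℝ)/d ≤ 1 + Real.log D := by
  induction D with
  | zero => simp
  | succ D ih =>
    rw [Finset.sum_Icc_succ_top (Nat.one_le_iff_ne_zero.mpr (Nat.succ_ne_zero D))]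
    rcases Nat.eq_zero_or_pos D with hD | hD
    · subst hD; norm_num
    · have hD0 : (0:ℝ) < D := by exact_mod_cast hD
      have hstep : (1:ℝ)/(D+1) ≤ Real.log (D+1) - Real.log D := by
        have hx : (0:ℝ) < ((D:ℝ)+1)/D := by positivity
        have h1 := Real.one_sub_inv_le_log_of_pos hx
        have h2 : Real.log (((D:ℝ)+1)/D) = Real.log ((D:ℝ)+1) - Real.log D :=
          Real.log_div (by positivity) (ne_of_gt hD0)
        have h3 : 1 - (((D:ℝ)+1)/D)⁻¹ = 1/((D:ℝ)+1) := by
          rw [inv_div]; field_simp; ring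
        rw [h2, h3] at h1; exact h1
      push_cast
      push_cast at ih
      linarith

/-- Boundedness of `L^m · e^{-c√L}` on `L ≥ 1`. -/
lemma exists_bound_rpow_exp (c m : ℝ) (hc : 0 < c) (hm : 0 ≤ m) :
    ∃ K : ℝ, 0 ≤ K ∧ ∀ L : ℝ, 1 ≤ L → L ^ m * Real.exp (-c * Real.sqrt L) ≤ K := by
  have htend := tendsto_rpow_mul_exp_neg_mul_atTop_nhds_zero (2*m) c hc
  have hev : ∀ᶠ s : ℝ in Filter.atTop,
      s ^ (2*m) * Real.exp (-c * s) < 1 :=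
    htend.eventually_lt_const (by norm_num)
  obtain ⟨s0, hs0⟩ := Filter.eventually_atTop.mp hev
  refine ⟨max 1 ((max 1 s0) ^ (2*m)), le_max_of_le_left zero_le_one, ?_⟩
  intro L hL
  have hL0 : (0:ℝ) ≤ L := by linarith
  have hs : Real.sqrt L ^ 2 = L := Real.sq_sqrt hL0
  have hsn : 0 ≤ Real.sqrt L := Real.sqrt_nonneg _
  have hrw : L ^ m = Real.sqrt L ^ (2*m) := by
    rw [← hs, ← Real.rpow_natCast (Real.sqrt L) 2, ← Real.rpow_mul hsn]
    norm_num
  rw [hrw]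
  rcases le_or_gt s0 (Real.sqrt L) with h | h
  · exact le_max_of_le_left (le_of_lt (hs0 _ h))
  · apply le_max_of_le_right
    calc Real.sqrt L ^ (2*m) * Real.exp (-c * Real.sqrt L)
        ≤ Real.sqrt L ^ (2*m) * 1 := by
          apply mul_le_mul_of_nonneg_left _ (Real.rpow_nonneg hsn _)
          exact Real.exp_le_one_iff.mpr (by nlinarith)
      _ ≤ (max 1 s0) ^ (2*m) := by
          rw [mul_one]
          exact Real.rpow_le_rpow hsn (le_max_of_le_right h.le) (by linarith)

section scratch
variable (ν ϖ c1 x0 : ℝ)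
    (hν0 : 0 < ν) (hν1 : ν < 1) (hϖ : 0 < ϖ) (hνϖ : ν + ϖ < 1)
    (hc1 : 0 < c1) (hx0 : 100 ≤ x0)
    (X : ℕ → ℝ) (hX0 : X 0 = x0)
    (hXrec : ∀ j : ℕ, X (j + 1) = X j * (1 + Real.exp (-c1 * Real.sqrt (Real.log (X j)))))

include hc1 hx0 hX0 hXrec

lemma Xfacts :
    (∀ j, 100 ≤ X j) ∧ (Monotone X) ∧ (∀ j, X (j+1) ≤ 2 * X j) ∧ (∀ M : ℝ, ∃ j, M < X j) := by
  have hX100 : ∀ j, 100 ≤ X j := by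
    intro j
    induction j with
    | zero => rw [hX0]; exact hx0
    | succ j ih =>
      rw [hXrec j]
      nlinarith [Real.exp_pos (-c1 * Real.sqrt (Real.log (X j)))]
  have hstep : ∀ j, X j ≤ X (j+1) := by
    intro j
    rw [hXrec j]
    nlinarith [Real.exp_pos (-c1 * Real.sqrt (Real.log (X j))), hX100 j]
  have hmono : Monotone X := monotone_nat_of_le_succ hstep
  have hexple : ∀ j, Real.exp (-c1 * Real.sqrt (Real.log (X j))) ≤ 1 := by
    intro j
    rw [Real.exp_le_one_iff]
    have h1 : 0 ≤ Real.log (X j) := Real.log_nonneg (by linarith [hX100 j])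
    have := Real.sqrt_nonneg (Real.log (X j))
    nlinarith
  have h2X : ∀ j, X (j+1) ≤ 2 * X j := by
    intro j
    rw [hXrec j]
    nlinarith [hexple j, hX100 j]
  refine ⟨hX100, hmono, h2X, ?_⟩
  intro M
  by_contra hcon
  push_neg at hcon
  have hM : 100 ≤ M := le_trans (hX100 0) (hcon 0)
  set δ := 100 * Real.exp (-c1 * Real.sqrt (Real.log M)) with hδ
  have hδ0 : 0 < δ := by positivity
  have hgrow : ∀ j : ℕ, x0 + j * δ ≤ X j := by
    intro j
    induction j with
    | zero => simp [hX0]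
    | succ j ih =>
      rw [hXrec j]
      have he : Real.exp (-c1 * Real.sqrt (Real.log M))
          ≤ Real.exp (-c1 * Real.sqrt (Real.log (X j))) := by
        apply Real.exp_le_exp.mpr
        have hlog : Real.log (X j) ≤ Real.log M :=
          Real.log_le_log (by linarith [hX100 j]) (hcon j)
        have hs := Real.sqrt_le_sqrt hlog
        nlinarith
      have : δ ≤ X j * Real.exp (-c1 * Real.sqrt (Real.log (X j))) := by
        rw [hδ]
        apply mul_le_mul (hX100 j) he (Real.exp_pos _).le (by linarith [hX100 j])
      push_cast
      nlinarith
  obtain ⟨n, hn⟩ := exists_nat_gt ((M - x0) / δ)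
  have := hgrow n
  have hcontra := hcon n
  rw [div_lt_iff₀ hδ0] at hn
  linarith

end scratch

set_option maxHeartbeats 2000000 in
/-- With `x_{j+1} = x_j (1 + e^{−c_1 √(log x_j)})`,
`I_j = (x_j, x_{j+1}] ∩ ℤ`, `K_j = |I_j|`: if `0 ≤ a_n ≤ 2` and on every interval `I_j` the
divisor sums satisfy `|∑_{n ∈ I_j, d ∣ n} a_n − K_j/d| ≤ C (K_j/d) e^{−c_1 √(log x_j)}` for
`1 ≤ d ≤ x_j^{1−ϖ}`, then the global divisor sums satisfy
`|∑_{n ≤ x, d ∣ n} a_n − x/d| ≤ C′ (x/d) e^{−(c_1/2)√(log x)}` for `x ≥ x_0`, `d ≤ x^ν`;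
in particular condition `R(ν)` holds. -/
theorem bombieri_sieve_stmt13 (ν ϖ c1 x0 : ℝ)
    (hν0 : 0 < ν) (hν1 : ν < 1) (hϖ : 0 < ϖ) (hνϖ : ν + ϖ < 1)
    (hc1 : 0 < c1) (hx0 : 100 ≤ x0)
    (X : ℕ → ℝ) (hX0 : X 0 = x0)
    (hXrec : ∀ j : ℕ, X (j + 1) = X j * (1 + Real.exp (-c1 * Real.sqrt (Real.log (X j)))))
    (a : ℕ → ℝ) (ha : ∀ n, 0 ≤ a n ∧ a n ≤ 2)
    (C : ℝ)
    (hC : ∀ j : ℕ, ∀ d : ℕ, 1 ≤ d → (d : ℝ) ≤ X j ^ (1 - ϖ) →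
      |(∑ n ∈ (Finset.Ioc ⌊X j⌋₊ ⌊X (j + 1)⌋₊).filter (fun n => d ∣ n), a n)
          - ((Finset.Ioc ⌊X j⌋₊ ⌊X (j + 1)⌋₊).card : ℝ) / d|
        ≤ C * (((Finset.Ioc ⌊X j⌋₊ ⌊X (j + 1)⌋₊).card : ℝ) / d) *
            Real.exp (-c1 * Real.sqrt (Real.log (X j)))) :
    (∃ C' : ℝ, ∀ x : ℝ, x0 ≤ x → ∀ d : ℕ, 1 ≤ d → (d : ℝ) ≤ x ^ ν →
      |(∑ n ∈ (Finset.Icc 1 ⌊x⌋₊).filter (fun n => d ∣ n), a n) - x / d|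
        ≤ C' * (x / d) * Real.exp (-(c1 / 2) * Real.sqrt (Real.log x))) ∧
    (∀ B : ℝ, 0 < B → ∃ CB : ℝ, ∀ x : ℝ, 2 ≤ x →
      ∑ d ∈ Finset.Icc 1 ⌊x ^ ν⌋₊,
        |(∑ n ∈ (Finset.Icc 1 ⌊x⌋₊).filter (fun n => d ∣ n), a n) - x / d|
        ≤ CB * x * Real.log x ^ (-B)) := by
  obtain ⟨hX100, hXmono, hX2, hXunbdd⟩ := Xfacts c1 x0 hc1 hx0 X hX0 hXrec
  have hex : ∃ C' : ℝ, ∀ x : ℝ, x0 ≤ x → ∀ d : ℕ, 1 ≤ d → (d : ℝ) ≤ x ^ ν →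
      |(∑ n ∈ (Finset.Icc 1 ⌊x⌋₊).filter (fun n => d ∣ n), a n) - x / d|
        ≤ C' * (x / d) * Real.exp (-(c1 / 2) * Real.sqrt (Real.log x)) :=
    ⟨_, bombieri_part1 ν ϖ c1 x0 hν0 hν1 hϖ hνϖ hc1 hx0 X hX100 hXmono hX2 hXunbdd
      hXrec hX0 a ha C hC⟩
  refine ⟨hex, ?_⟩
  obtain ⟨C', h1⟩ := hex
  intro B hB
  obtain ⟨K, hK0, hKb⟩ := exists_bound_rpow_exp (c1/2) (B+1) (by positivity) (by linarith)
  have hlogx0 : 0 < Real.log x0 := Real.log_pos (by linarith)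
  refine ⟨3*(x0^ν)*(Real.log x0)^B + 2*(|C'| *K), ?_⟩
  intro x hx2
  have hxpos : (0:ℝ) < x := by linarith
  set L := Real.log x with hLdef
  have hL2 : 0 < L := Real.log_pos (by linarith)
  set D := ⌊x ^ ν⌋₊ with hDdef
  have hDle : (D:ℝ) ≤ x^ν := Nat.floor_le (Real.rpow_nonneg (le_of_lt hxpos) ν)
  set E := Real.exp (-(c1 / 2) * Real.sqrt L) with hEdef
  have hE0 : 0 < E := Real.exp_pos _
  have hPB : (0:ℝ) < L^B := Real.rpow_pos_of_pos hL2 B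
  have hLnegB : L^(-B) = (L^B)⁻¹ := Real.rpow_neg (le_of_lt hL2) B
  have hxLB : (0:ℝ) ≤ x * L^(-B) := by
    rw [hLnegB]; positivity
  by_cases hxx : x0 ≤ x
  · -- large x : use part 1
    have hterm : ∀ d ∈ Finset.Icc 1 D,
        |(∑ n ∈ (Finset.Icc 1 ⌊x⌋₊).filter (fun n => d ∣ n), a n) - x / d|
          ≤ (|C'| * x * E) * (1/(d:ℝ)) := by
      intro d hd
      rw [Finset.mem_Icc] at hd
      have hd1 : 1 ≤ d := hd.1
      have hdle : (d:ℝ) ≤ x^ν := le_trans (by exact_mod_cast hd.2) hDle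
      have hdR : (0:ℝ) < (d:ℝ) := by exact_mod_cast hd1
      have h := h1 x hxx d hd1 hdle
      rw [← hLdef, ← hEdef] at h
      have h2 : C' * (x/d) * E ≤ |C'| * (x/d) * E := by
        apply mul_le_mul_of_nonneg_right
          (mul_le_mul_of_nonneg_right (le_abs_self C') (by positivity)) hE0.le
      have h3 : |C'| * (x/(d:ℝ)) * E = (|C'| * x * E) * (1/(d:ℝ)) := by ring
      linarith
    have hsum1 : ∑ d ∈ Finset.Icc 1 D,
        |(∑ n ∈ (Finset.Icc 1 ⌊x⌋₊).filter (fun n => d ∣ n), a n) - x / d|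
        ≤ (|C'| * x * E) * ∑ d ∈ Finset.Icc 1 D, (1/(d:ℝ)) := by
      rw [Finset.mul_sum]
      exact Finset.sum_le_sum hterm
    have hharm := sum_inv_le_one_add_log D
    have hlogD : Real.log D ≤ L := by
      rcases Nat.eq_zero_or_pos D with h0 | h0
      · rw [h0]; simp [hL2.le]
      · have hD1 : (1:ℝ) ≤ (D:ℝ) := by exact_mod_cast h0
        calc Real.log D ≤ Real.log (x^ν) := Real.log_le_log (by linarith) hDle
          _ = ν * L := Real.log_rpow hxpos ν
          _ ≤ 1 * L := mul_le_mul_of_nonneg_right hν1.le hL2.le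
          _ = L := one_mul L
    have hCx0 : (0:ℝ) ≤ |C'| * x * E := by positivity
    have hsum2 : (|C'| * x * E) * ∑ d ∈ Finset.Icc 1 D, (1/(d:ℝ))
        ≤ (|C'| * x * E) * (1 + L) :=
      mul_le_mul_of_nonneg_left (by linarith) hCx0
    -- exponential beats powers of log
    have hL1 : (1:ℝ) ≤ L := by
      rw [hLdef, Real.le_log_iff_exp_le hxpos]
      have := Real.exp_one_lt_d9
      linarith
    have hKB := hKb L hL1
    rw [← hEdef] at hKB
    have hEL : E * (1 + L) ≤ 2*K*L^(-B) := by
      have h6 : (1+L) ≤ 2*L := by linarith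
      have h7 : E*(1+L)*(L^B) ≤ E*(2*L)*(L^B) :=
        mul_le_mul_of_nonneg_right (mul_le_mul_of_nonneg_left h6 hE0.le) hPB.le
      have h8 : E*(2*L)*(L^B) = 2*(L^(B+1) * E) := by
        rw [Real.rpow_add_one (ne_of_gt hL2)]; ring
      have h9 : E*(1+L)*(L^B) ≤ 2*K := by
        rw [h8] at h7; linarith
      calc E*(1+L) = (E*(1+L)*(L^B))*(L^B)⁻¹ := by field_simp
        _ ≤ (2*K)*(L^B)⁻¹ := mul_le_mul_of_nonneg_right h9 (inv_nonneg.mpr hPB.le)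
        _ = 2*K*L^(-B) := by rw [hLnegB]
    have hfinal : (|C'| * x * E) * (1 + L) ≤ (2*(|C'| *K)) * (x * L^(-B)) := by
      have h10 : (|C'| * x * E) * (1+L) = (|C'| * x) * (E * (1+L)) := by ring
      have h11 := mul_le_mul_of_nonneg_left hEL (by positivity : (0:ℝ) ≤ |C'| * x)
      rw [h10]
      calc (|C'| * x) * (E * (1+L)) ≤ (|C'| * x) * (2*K*L^(-B)) := h11
        _ = (2*(|C'| *K)) * (x * L^(-B)) := by ring
    have hCB1 : (0:ℝ) ≤ 3*(x0^ν)*(Real.log x0)^B := by positivity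
    calc ∑ d ∈ Finset.Icc 1 D,
          |(∑ n ∈ (Finset.Icc 1 ⌊x⌋₊).filter (fun n => d ∣ n), a n) - x / d|
        ≤ (|C'| * x * E) * (1 + L) := le_trans hsum1 hsum2
      _ ≤ (2*(|C'| *K)) * (x * L^(-B)) := hfinal
      _ ≤ (3*(x0^ν)*(Real.log x0)^B + 2*(|C'| *K)) * x * L^(-B) := by
          have := mul_le_mul_of_nonneg_right
            (le_add_of_nonneg_left hCB1 : 2*(|C'| *K) ≤ 3*(x0^ν)*(Real.log x0)^B + 2*(|C'| *K))
            hxLB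
          calc (2*(|C'| *K)) * (x * L^(-B))
              ≤ (3*(x0^ν)*(Real.log x0)^B + 2*(|C'| *K)) * (x * L^(-B)) := this
            _ = (3*(x0^ν)*(Real.log x0)^B + 2*(|C'| *K)) * x * L^(-B) := by ring
  · -- small x : trivial bound
    push_neg at hxx
    have hterm : ∀ d ∈ Finset.Icc 1 D,
        |(∑ n ∈ (Finset.Icc 1 ⌊x⌋₊).filter (fun n => d ∣ n), a n) - x / d| ≤ 3*x := by
      intro d hd
      rw [Finset.mem_Icc] at hd
      have hdR : (1:ℝ) ≤ (d:ℝ) := by exact_mod_cast hd.1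
      set T := ∑ n ∈ (Finset.Icc 1 ⌊x⌋₊).filter (fun n => d ∣ n), a n with hT
      have hT0 : 0 ≤ T := Finset.sum_nonneg (fun n _ => (ha n).1)
      have hT2 : T ≤ 2*x := by
        have hc1' : ((Finset.Icc 1 ⌊x⌋₊).filter (fun n => d ∣ n)).card ≤ ⌊x⌋₊ := by
          calc ((Finset.Icc 1 ⌊x⌋₊).filter (fun n => d ∣ n)).card
              ≤ (Finset.Icc 1 ⌊x⌋₊).card := Finset.card_filter_le _ _
            _ = ⌊x⌋₊ := by rw [Nat.card_Icc]; omega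
        have hsum : T ≤ (((Finset.Icc 1 ⌊x⌋₊).filter (fun n => d ∣ n)).card : ℝ) * 2 := by
          have := Finset.sum_le_card_nsmul ((Finset.Icc 1 ⌊x⌋₊).filter (fun n => d ∣ n)) a 2
            (fun n _ => (ha n).2)
          simpa [nsmul_eq_mul] using this
        have hfl : (⌊x⌋₊ : ℝ) ≤ x := Nat.floor_le hxpos.le
        have : (((Finset.Icc 1 ⌊x⌋₊).filter (fun n => d ∣ n)).card : ℝ) ≤ (⌊x⌋₊:ℝ) := by
          exact_mod_cast hc1'
        linarith
      have hxd : x/(d:ℝ) ≤ x := div_le_self hxpos.le hdR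
      have hxd0 : 0 ≤ x/(d:ℝ) := div_nonneg hxpos.le (by linarith)
      have habs : |T - x/(d:ℝ)| ≤ |T| + |x/(d:ℝ)| := abs_sub T (x/(d:ℝ))
      rw [abs_of_nonneg hT0, abs_of_nonneg hxd0] at habs
      linarith
    have hsumcard : ∑ d ∈ Finset.Icc 1 D,
        |(∑ n ∈ (Finset.Icc 1 ⌊x⌋₊).filter (fun n => d ∣ n), a n) - x / d|
        ≤ (D:ℝ) * (3*x) := by
      have := Finset.sum_le_card_nsmul (Finset.Icc 1 D)
        (fun d => |(∑ n ∈ (Finset.Icc 1 ⌊x⌋₊).filter (fun n => d ∣ n), a n) - x / d|)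
        (3*x) hterm
      have hcard : (Finset.Icc 1 D).card = D := by rw [Nat.card_Icc]; omega
      rw [hcard] at this
      simpa [nsmul_eq_mul] using this
    have hxν : x^ν ≤ x0^ν := Real.rpow_le_rpow hxpos.le hxx.le hν0.le
    have hLB : L^B ≤ (Real.log x0)^B :=
      Real.rpow_le_rpow hL2.le (Real.log_le_log hxpos hxx.le) hB.le
    have hone : (1:ℝ) ≤ (Real.log x0)^B * (L^B)⁻¹ := by
      rw [← div_eq_mul_inv, le_div_iff₀ hPB]
      linarith
    have hkey : 3*(x0^ν)*x ≤ (3*(x0^ν)*(Real.log x0)^B) * x * L^(-B) := by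
      have hx0ν : (0:ℝ) ≤ 3*(x0^ν)*x := by positivity
      calc 3*(x0^ν)*x = (3*(x0^ν)*x) * 1 := by ring
        _ ≤ (3*(x0^ν)*x) * ((Real.log x0)^B * (L^B)⁻¹) :=
            mul_le_mul_of_nonneg_left hone hx0ν
        _ = (3*(x0^ν)*(Real.log x0)^B) * x * L^(-B) := by rw [hLnegB]; ring
    have hKx : (0:ℝ) ≤ 2*(|C'| *K) * (x * L^(-B)) :=
      mul_nonneg (by positivity) hxLB
    calc ∑ d ∈ Finset.Icc 1 D,
          |(∑ n ∈ (Finset.Icc 1 ⌊x⌋₊).filter (fun n => d ∣ n), a n) - x / d|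
        ≤ (D:ℝ) * (3*x) := hsumcard
      _ ≤ 3*(x0^ν)*x := by
          have h12 : (D:ℝ) ≤ x0^ν := hDle.trans hxν
          have h13 := mul_le_mul_of_nonneg_right h12 (by positivity : (0:ℝ) ≤ 3*x)
          linarith
      _ ≤ (3*(x0^ν)*(Real.log x0)^B) * x * L^(-B) := hkey
      _ ≤ (3*(x0^ν)*(Real.log x0)^B + 2*(|C'| *K)) * x * L^(-B) := by
          have h14 : (3*(x0^ν)*(Real.log x0)^B + 2*(|C'| *K)) * x * L^(-B)
              = (3*(x0^ν)*(Real.log x0)^B) * x * L^(-B) + 2*(|C'| *K) * (x * L^(-B)) := by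
            ring
          linarith
end

section
/- Let M ≥ 2 be an even integer. There exists δ_0 > 0, depending only on M, such that for every δ with 0 < δ ≤ δ_0 and every integer k ≥ 2, one has Z_k < 0. -/
open Finset MeasureTheory

/-- `ℓ(v;ξ) = max(0, ξ^{−4} (ξ² − (v_1²+⋯+v_M²))²)`. -/
noncomputable def ell {M : ℕ} (v : Fin M → ℝ) (ξ : ℝ) : ℝ :=
  max 0 ((ξ ^ 4)⁻¹ * (ξ ^ 2 - ∑ i, v i ^ 2) ^ 2)

/-- The function `f(u) = u_1⋯u_M [ℓ(u−w;δ³) − binom(M,M/2)^{−1} ∑_{v ∈ V} ℓ(u−w−v;δ³)]`,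
where `w = (1/M,…,1/M)` and `V` is the set of vectors with exactly `M/2` coordinates equal
to `δ/2` and `M/2` coordinates equal to `−δ/2` (indexed by the subsets of `Fin M` of
cardinality `M/2`). -/
noncomputable def fdef (M : ℕ) (δ : ℝ) (u : Fin M → ℝ) : ℝ :=
  (∏ i, u i) *
    (ell (fun i => u i - 1 / M) (δ ^ 3) -
      ((M.choose (M / 2) : ℝ))⁻¹ *
        ∑ s ∈ Finset.univ.powersetCard (M / 2),
          ell (fun i => u i - 1 / M - (if i ∈ s then δ / 2 else -δ / 2)) (δ ^ 3))

/-- Embedding of the `(M−1)`-dimensional simplex parametrization into `U_M`. -/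
noncomputable def simplexEmb (M : ℕ) (t : Fin (M - 1) → ℝ) : Fin M → ℝ :=
  fun i => if h : (i : ℕ) < M - 1 then t ⟨i, h⟩ else 1 - ∑ j, t j

/-- `Z_k = ∫_{U_M} u_1^k f(u)/(u_1⋯u_M) du`, as an `(M−1)`-dimensional integral over
`{t : t_i ≥ 0, ∑ t_i ≤ 1}` with `u = (t, 1 − ∑ t)`. -/
noncomputable def Zk (M : ℕ) (hM : 0 < M) (δ : ℝ) (k : ℕ) : ℝ :=
  ∫ t in {t : Fin (M - 1) → ℝ | (∀ i, 0 ≤ t i) ∧ ∑ i, t i ≤ 1},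
    (simplexEmb M t ⟨0, hM⟩) ^ k * fdef M δ (simplexEmb M t) / ∏ i, simplexEmb M t i

/-! ### Auxiliary definitions and lemmas -/

/-- The "bracket" in the definition of `fdef`. -/
noncomputable def Ddef (M : ℕ) (δ : ℝ) (u : Fin M → ℝ) : ℝ :=
  ell (fun i => u i - 1 / M) (δ ^ 3) -
    ((M.choose (M / 2) : ℝ))⁻¹ *
      ∑ s ∈ Finset.univ.powersetCard (M / 2),
        ell (fun i => u i - 1 / M - (if i ∈ s then δ / 2 else -δ / 2)) (δ ^ 3)

lemma fdef_eq (M : ℕ) (δ : ℝ) (u : Fin M → ℝ) :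
    fdef M δ u = (∏ i, u i) * Ddef M δ u := rfl

lemma ell_eq {M : ℕ} (v : Fin M → ℝ) (ξ : ℝ) :
    ell v ξ = (ξ ^ 4)⁻¹ * (ξ ^ 2 - ∑ i, v i ^ 2) ^ 2 :=
  max_eq_right (by positivity)

lemma sum_sign (M : ℕ) (hM : 2 ≤ M) (hMe : Even M) (δ : ℝ) (i : Fin M) :
    ∑ s ∈ Finset.univ.powersetCard (M / 2), (if i ∈ s then δ / 2 else -δ / 2) = 0 := by
  have hhalf : M - M / 2 = M / 2 := by
    obtain ⟨m, rfl⟩ := hMe; omega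
  refine Finset.sum_involution (fun s _ => sᶜ) ?_ ?_ ?_ ?_
  · intro s hs
    by_cases h : i ∈ s <;> simp [h] <;> ring
  · intro s hs _
    intro hc
    have : i ∈ s ↔ i ∈ sᶜ := by rw [hc]
    simp at this
  · intro s hs
    rw [Finset.mem_powersetCard_univ] at hs ⊢
    rw [Finset.card_compl, hs, Fintype.card_fin, hhalf]
  · intro s hs; simp

lemma Ddef_le (M : ℕ) (hM : 2 ≤ M) (hMe : Even M) (δ : ℝ) (hδ : 0 < δ) (u : Fin M → ℝ) :
    Ddef M δ u ≤ ((δ ^ 3) ^ 4)⁻¹ * ((M : ℝ) * (δ / 2) ^ 2 * (2 * (δ ^ 3) ^ 2 - (M : ℝ) * (δ / 2) ^ 2)) := by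
  simp only [Ddef, ell_eq]
  set ξ : ℝ := δ ^ 3 with hξ
  set R : ℝ := (M : ℝ) * (δ / 2) ^ 2 with hR
  set C : ℝ := (M.choose (M / 2) : ℝ) with hC
  set P := (Finset.univ : Finset (Fin M)).powersetCard (M / 2) with hP
  set a : ℝ := ξ ^ 2 - ∑ i, (u i - 1 / M) ^ 2 with ha
  set b : Finset (Fin M) → ℝ :=
    fun s => 2 * ∑ i, (u i - 1 / M) * (if i ∈ s then δ / 2 else -δ / 2) - R with hb
  have hCpos : 0 < C := by
    rw [hC]
    exact_mod_cast Nat.choose_pos (Nat.div_le_self M 2)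
  have hcard : (P.card : ℝ) = C := by
    rw [hP, Finset.card_powersetCard, Finset.card_univ, Fintype.card_fin, hC]
  have hexp : ∀ s ∈ P, ξ ^ 2 - ∑ i, (u i - 1 / M - (if i ∈ s then δ / 2 else -δ / 2)) ^ 2
      = a + b s := by
    intro s _
    have hv2 : ∑ i : Fin M, (if i ∈ s then δ / 2 else -δ / 2) ^ 2 = R := by
      have h1 : ∀ i : Fin M, (if i ∈ s then δ / 2 else -δ / 2) ^ 2 = (δ / 2) ^ 2 := by
        intro i; split <;> ring
      simp only [h1]
      rw [Finset.sum_const, Finset.card_univ, Fintype.card_fin, nsmul_eq_mul, hR]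
    have h2 : ∑ i, (u i - 1 / M - (if i ∈ s then δ / 2 else -δ / 2)) ^ 2
        = ∑ i, (u i - 1 / M) ^ 2
          - 2 * ∑ i, (u i - 1 / M) * (if i ∈ s then δ / 2 else -δ / 2)
          + ∑ i : Fin M, (if i ∈ s then δ / 2 else -δ / 2) ^ 2 := by
      rw [Finset.mul_sum, ← Finset.sum_sub_distrib, ← Finset.sum_add_distrib]
      exact Finset.sum_congr rfl fun i _ => by ring
    rw [h2, hv2, ha, hb]; ring
  have hsum_b : ∑ s ∈ P, b s = -(C * R) := by
    have h0 : ∑ s ∈ P, ∑ i, (u i - 1 / M) * (if i ∈ s then δ / 2 else -δ / 2) = 0 := by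
      rw [Finset.sum_comm]
      refine Finset.sum_eq_zero fun i _ => ?_
      rw [← Finset.mul_sum, sum_sign M hM hMe δ i, mul_zero]
    rw [hb]
    simp only [Finset.sum_sub_distrib, ← Finset.mul_sum, h0, Finset.sum_const, nsmul_eq_mul, hcard]
    ring
  have hjensen : (C * R) ^ 2 ≤ C * ∑ s ∈ P, b s ^ 2 := by
    have := sq_sum_le_card_mul_sum_sq (s := P) (f := b)
    rw [hsum_b] at this
    calc (C * R) ^ 2 = (-(C * R)) ^ 2 := by ring
      _ ≤ (P.card : ℝ) * ∑ s ∈ P, b s ^ 2 := this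
      _ = C * ∑ s ∈ P, b s ^ 2 := by rw [hcard]
  have hlower : C * (a - R) ^ 2 ≤ ∑ s ∈ P, (a + b s) ^ 2 := by
    have hexp2 : ∑ s ∈ P, (a + b s) ^ 2
        = (P.card : ℝ) * a ^ 2 + 2 * a * ∑ s ∈ P, b s + ∑ s ∈ P, b s ^ 2 := by
      have h3 : ∀ s ∈ P, (a + b s) ^ 2 = a ^ 2 + 2 * a * b s + b s ^ 2 := fun s _ => by ring
      rw [Finset.sum_congr rfl h3, Finset.sum_add_distrib, Finset.sum_add_distrib,
        Finset.sum_const, ← Finset.mul_sum, nsmul_eq_mul]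
    rw [hexp2, hcard, hsum_b]
    have hsumsq : C * R ^ 2 ≤ ∑ s ∈ P, b s ^ 2 := by
      nlinarith [hjensen, sq_nonneg R, hCpos]
    nlinarith [hsumsq]
  have hrew : ∑ s ∈ P, (ξ ^ 4)⁻¹ *
        (ξ ^ 2 - ∑ i, (u i - 1 / M - (if i ∈ s then δ / 2 else -δ / 2)) ^ 2) ^ 2
      = (ξ ^ 4)⁻¹ * ∑ s ∈ P, (a + b s) ^ 2 := by
    rw [Finset.mul_sum]
    exact Finset.sum_congr rfl fun s hs => by rw [hexp s hs]
  rw [hrew]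
  have hinvξ : (0:ℝ) ≤ (ξ ^ 4)⁻¹ := by positivity
  have hmid : (a - R) ^ 2 ≤ C⁻¹ * ∑ s ∈ P, (a + b s) ^ 2 := by
    rw [inv_mul_eq_div, le_div_iff₀ hCpos]
    nlinarith [hlower]
  have hstep := mul_le_mul_of_nonneg_left hmid hinvξ
  have hassoc : (ξ ^ 4)⁻¹ * (C⁻¹ * ∑ s ∈ P, (a + b s) ^ 2)
      = C⁻¹ * ((ξ ^ 4)⁻¹ * ∑ s ∈ P, (a + b s) ^ 2) := by ring
  have haξ : a ≤ ξ ^ 2 := by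
    rw [ha]
    have : (0:ℝ) ≤ ∑ i, (u i - 1 / (M:ℝ)) ^ 2 := Finset.sum_nonneg fun i _ => sq_nonneg _
    linarith
  have hRpos : 0 < R := by rw [hR]; positivity
  have hfinal : (ξ ^ 4)⁻¹ * a ^ 2 - (ξ ^ 4)⁻¹ * (a - R) ^ 2
      ≤ (ξ ^ 4)⁻¹ * (R * (2 * ξ ^ 2 - R)) := by
    have h4 : (ξ ^ 4)⁻¹ * a ^ 2 - (ξ ^ 4)⁻¹ * (a - R) ^ 2
        = (ξ ^ 4)⁻¹ * (R * (2 * a - R)) := by ring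
    rw [h4]
    apply mul_le_mul_of_nonneg_left _ hinvξ
    apply mul_le_mul_of_nonneg_left _ hRpos.le
    linarith
  linarith [hstep, hfinal, hassoc.le, hassoc.ge]

lemma sum_hyperplane_null (n : ℕ) (hn : 0 < n) :
    (volume : Measure (Fin n → ℝ)) {t | ∑ i, t i = 1} = 0 := by
  classical
  set L : (Fin n → ℝ) →ₗ[ℝ] ℝ := LinearMap.lsum ℝ (fun _ : Fin n => ℝ) ℝ (fun _ => LinearMap.id)
    with hL
  have hLapp : ∀ t, L t = ∑ i, t i := by
    intro t; simp [hL, LinearMap.lsum_apply]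
  set t₀ : Fin n → ℝ := fun _ => 1 / n with ht₀
  have ht₀sum : L t₀ = 1 := by
    rw [hLapp]; simp [ht₀]
    field_simp
  set S : AffineSubspace ℝ (Fin n → ℝ) := AffineSubspace.mk' t₀ (LinearMap.ker L) with hS
  have hset : {t : Fin n → ℝ | ∑ i, t i = 1} = (S : Set (Fin n → ℝ)) := by
    ext t
    simp only [Set.mem_setOf_eq, hS, SetLike.mem_coe, AffineSubspace.mem_mk',
      LinearMap.mem_ker, vsub_eq_sub, map_sub, ht₀sum, ← hLapp]
    constructor <;> intro h <;> linarith
  rw [hset]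
  apply Measure.addHaar_affineSubspace
  intro htop
  have hdir : S.direction = ⊤ := by rw [htop, AffineSubspace.direction_top]
  rw [hS, AffineSubspace.direction_mk'] at hdir
  have : L t₀ = 0 := by
    rw [LinearMap.ker_eq_top] at hdir
    rw [hdir]; rfl
  rw [ht₀sum] at this; norm_num at this

lemma emb_cont (M : ℕ) : Continuous (simplexEmb M) := by
  refine continuous_pi fun i => ?_
  by_cases h : (i : ℕ) < M - 1
  · simp only [simplexEmb, h, dif_pos]
    exact continuous_apply _
  · simp only [simplexEmb, h, dif_neg, not_false_iff]
    exact continuous_const.sub (continuous_finset_sum _ fun j _ => continuous_apply j)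

lemma ell_cont' {M : ℕ} (ξ : ℝ) (g : (Fin M → ℝ) → Fin M → ℝ)
    (hg : ∀ i, Continuous fun u => g u i) :
    Continuous fun u => ell (g u) ξ := by
  unfold ell
  refine continuous_const.max (continuous_const.mul ((continuous_const.sub ?_).pow 2))
  exact continuous_finset_sum _ fun i _ => (hg i).pow 2

lemma Ddef_cont (M : ℕ) (δ : ℝ) : Continuous (Ddef M δ) := by
  unfold Ddef
  refine (ell_cont' _ _ fun i => (continuous_apply i).sub continuous_const).sub
    (continuous_const.mul (continuous_finset_sum _ fun s _ => ?_))
  exact ell_cont' _ _ fun i => ((continuous_apply i).sub continuous_const).sub continuous_const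

lemma emb_zero (M : ℕ) (hM : 2 ≤ M) (h0 : 0 < M) (t : Fin (M - 1) → ℝ) :
    simplexEmb M t ⟨0, h0⟩ = t ⟨0, by omega⟩ := by
  have hc : ((⟨0, h0⟩ : Fin M) : ℕ) < M - 1 := by simp; omega
  simp only [simplexEmb, hc, dif_pos]

/-- Let `M ≥ 2` be even.  There exists `δ_0 > 0`, depending only on `M`,
such that for every `0 < δ ≤ δ0` and every integer `k ≥ 2`, `Z_k < 0`. -/
theorem bombieri_sieve_stmt18 (M : ℕ) (hM : 2 ≤ M) (hMeven : Even M) :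
    ∃ δ0 : ℝ, 0 < δ0 ∧ ∀ δ : ℝ, 0 < δ → δ ≤ δ0 → ∀ k : ℕ, 2 ≤ k →
      Zk M (by omega) δ k < 0 := by
  refine ⟨1/2, by norm_num, fun δ hδ hδ0 k hk => ?_⟩
  have hM0 : 0 < M := by omega
  have hn1 : 1 ≤ M - 1 := by omega
  set K : ℝ := ((δ ^ 3) ^ 4)⁻¹ *
    ((M : ℝ) * (δ / 2) ^ 2 * (2 * (δ ^ 3) ^ 2 - (M : ℝ) * (δ / 2) ^ 2)) with hKdef
  have hM2 : (2:ℝ) ≤ M := by exact_mod_cast hM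
  have hδ4 : δ ^ 4 ≤ 1 / 16 := by
    have := pow_le_pow_left₀ hδ.le hδ0 4
    norm_num at this
    linarith
  have hKneg : K < 0 := by
    have hneg : 2 * (δ ^ 3) ^ 2 - (M : ℝ) * (δ / 2) ^ 2 < 0 := by
      have h1 : (δ ^ 3) ^ 2 = δ ^ 4 * δ ^ 2 := by ring
      have h2 : 0 < δ ^ 2 := by positivity
      nlinarith [hδ4, h2]
    have h1 : (0:ℝ) < ((δ ^ 3) ^ 4)⁻¹ := by positivity
    have h2 : (0:ℝ) < (M : ℝ) * (δ / 2) ^ 2 := by positivity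
    rw [hKdef]
    exact mul_neg_of_pos_of_neg h1 (mul_neg_of_pos_of_neg h2 hneg)
  rw [Zk]
  set T : Set (Fin (M - 1) → ℝ) := {t | (∀ i, 0 ≤ t i) ∧ ∑ i, t i ≤ 1} with hT
  have hTclosed : IsClosed T := by
    have : T = (⋂ i, {t : Fin (M - 1) → ℝ | 0 ≤ t i}) ∩ {t | ∑ i, t i ≤ 1} := by
      ext t; simp [hT, Set.mem_iInter]
    rw [this]
    exact (isClosed_iInter fun i => isClosed_le continuous_const (continuous_apply i)).inter
      (isClosed_le (continuous_finset_sum _ fun j _ => continuous_apply j) continuous_const)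
  have hTsub : T ⊆ Set.Icc (fun _ => (0:ℝ)) (fun _ => (1:ℝ)) := by
    intro t ht
    refine ⟨fun i => ht.1 i, fun i => ?_⟩
    calc t i ≤ ∑ j, t j := Finset.single_le_sum (fun j _ => ht.1 j) (Finset.mem_univ i)
      _ ≤ 1 := ht.2
  have hTcompact : IsCompact T := (isCompact_Icc).of_isClosed_subset hTclosed hTsub
  -- the null set where the product vanishes
  have hNull : (volume : Measure (Fin (M - 1) → ℝ)) {t | ∏ i, simplexEmb M t i = 0} = 0 := by
    have hsub : {t : Fin (M - 1) → ℝ | ∏ i, simplexEmb M t i = 0}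
        ⊆ ⋃ i : Fin M, {t | simplexEmb M t i = 0} := by
      intro t ht
      simp only [Set.mem_setOf_eq] at ht
      rw [Finset.prod_eq_zero_iff] at ht
      obtain ⟨i, _, hi⟩ := ht
      exact Set.mem_iUnion.2 ⟨i, hi⟩
    refine measure_mono_null hsub (measure_iUnion_null fun i => ?_)
    by_cases h : (i : ℕ) < M - 1
    · have he : {t : Fin (M - 1) → ℝ | simplexEmb M t i = 0} = {t | t ⟨i, h⟩ = 0} := by
        ext t; simp [simplexEmb, h]
      rw [he, volume_pi]
      exact Measure.pi_hyperplane _ _ 0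
    · have he : {t : Fin (M - 1) → ℝ | simplexEmb M t i = 0} ⊆ {t | ∑ j, t j = 1} := by
        intro t ht
        simp only [Set.mem_setOf_eq, simplexEmb, h, dif_neg, not_false_iff] at ht ⊢
        linarith
      exact measure_mono_null he (sum_hyperplane_null _ (by omega))
  have hpf : (0:ℕ) < M := hM0
  -- a.e. equality of the integrand with the nice integrand
  have hstep0 : ∫ t in T,
        (simplexEmb M t ⟨0, by omega⟩) ^ k * fdef M δ (simplexEmb M t) / ∏ i, simplexEmb M t i
      = ∫ t in T, (t ⟨0, by omega⟩) ^ k * Ddef M δ (simplexEmb M t) := by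
    refine setIntegral_congr_ae hTclosed.measurableSet ?_
    have h1 : ∀ᵐ t : Fin (M - 1) → ℝ, t ∉ {t | ∏ i, simplexEmb M t i = 0} :=
      measure_eq_zero_iff_ae_notMem.mp hNull
    filter_upwards [h1] with t ht _
    have hprod : ∏ i, simplexEmb M t i ≠ 0 := ht
    rw [fdef_eq, emb_zero M hM (by omega) t, mul_comm (∏ i, simplexEmb M t i) (Ddef M δ _),
      ← mul_assoc, mul_div_assoc, div_self hprod, mul_one]
  rw [hstep0]
  -- integrability
  have hDc : Continuous fun t : Fin (M - 1) → ℝ =>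
      (t ⟨0, by omega⟩) ^ k * Ddef M δ (simplexEmb M t) :=
    ((continuous_apply _).pow k).mul ((Ddef_cont M δ).comp (emb_cont M))
  have hKc : Continuous fun t : Fin (M - 1) → ℝ => K * (t ⟨0, by omega⟩) ^ k :=
    continuous_const.mul ((continuous_apply _).pow k)
  have hDint : IntegrableOn (fun t : Fin (M - 1) → ℝ =>
      (t ⟨0, by omega⟩) ^ k * Ddef M δ (simplexEmb M t)) T :=
    hDc.continuousOn.integrableOn_compact hTcompact
  have hKint : IntegrableOn (fun t : Fin (M - 1) → ℝ => K * (t ⟨0, by omega⟩) ^ k) T :=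
    hKc.continuousOn.integrableOn_compact hTcompact
  have hmono : ∫ t in T, (t ⟨0, by omega⟩) ^ k * Ddef M δ (simplexEmb M t)
      ≤ ∫ t in T, K * (t ⟨0, by omega⟩) ^ k := by
    refine setIntegral_mono_on hDint hKint hTclosed.measurableSet fun t ht => ?_
    have h0k : (0:ℝ) ≤ (t ⟨0, by omega⟩) ^ k := pow_nonneg (ht.1 _) k
    calc (t ⟨0, by omega⟩) ^ k * Ddef M δ (simplexEmb M t)
        ≤ (t ⟨0, by omega⟩) ^ k * K :=
          mul_le_mul_of_nonneg_left (Ddef_le M hM hMeven δ hδ (simplexEmb M t)) h0k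
      _ = K * (t ⟨0, by omega⟩) ^ k := mul_comm _ _
  have hconstmul : ∫ t in T, K * (t ⟨0, by omega⟩) ^ k
      = K * ∫ t in T, (t ⟨0, by omega⟩) ^ k := integral_const_mul K _
  -- positivity of ∫ (t 0)^k over T
  have hIpos : 0 < ∫ t in T, (t ⟨0, by omega⟩ : ℝ) ^ k := by
    set f : (Fin (M - 1) → ℝ) → ℝ := fun t => (t ⟨0, by omega⟩) ^ k with hf
    have hfc : Continuous f := (continuous_apply _).pow k
    have hfint : IntegrableOn f T := hfc.continuousOn.integrableOn_compact hTcompact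
    set B : Set (Fin (M - 1) → ℝ) := Set.Icc (fun _ => 1/(2*M)) (fun _ => 1/M) with hB
    have hMpos : (0:ℝ) < M := by positivity
    have hBsub : B ⊆ T := by
      intro t ht
      have h1 : ∀ i, 1/(2*(M:ℝ)) ≤ t i := fun i => ht.1 i
      have h2 : ∀ i, t i ≤ 1/(M:ℝ) := fun i => ht.2 i
      constructor
      · intro i
        have h3 : (0:ℝ) < 1/(2*M) := by positivity
        linarith [h1 i]
      · calc ∑ i, t i ≤ ∑ _i : Fin (M - 1), 1/(M:ℝ) := Finset.sum_le_sum fun i _ => h2 i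
          _ = (M - 1 : ℕ) * (1/(M:ℝ)) := by
              rw [Finset.sum_const, Finset.card_univ, Fintype.card_fin, nsmul_eq_mul]
          _ ≤ 1 := by
              rw [mul_one_div, div_le_one hMpos]
              have : M - 1 ≤ M := by omega
              exact_mod_cast this
    have hEps : (0:ℝ) < 1/(2*M) := by positivity
    have hint1 : 0 < (1/(2*(M:ℝ)))^k * (volume B).toReal := by
      have hvol : (volume B).toReal = ∏ _i : Fin (M - 1), (1/(M:ℝ) - 1/(2*M)) := by
        rw [hB, Real.volume_Icc_pi_toReal]
        intro i
        rw [div_le_div_iff₀ (by positivity) hMpos]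
        linarith
      rw [hvol]
      have : (0:ℝ) < ∏ _i : Fin (M - 1), (1/(M:ℝ) - 1/(2*M)) := by
        apply Finset.prod_pos
        intro i _
        rw [sub_pos, div_lt_div_iff₀ (by positivity) hMpos]
        linarith
      positivity
    have hconst_le : ∀ t ∈ B, (1/(2*(M:ℝ)))^k ≤ f t := by
      intro t ht
      exact pow_le_pow_left₀ hEps.le (ht.1 _) k
    have hBmeas : MeasurableSet B := measurableSet_Icc
    have hfBint : IntegrableOn f B := hfint.mono_set hBsub
    have hstep1 : (1/(2*(M:ℝ)))^k * (volume B).toReal ≤ ∫ t in B, f t := by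
      have hb := setIntegral_mono_on (integrableOn_const ?_) hfBint hBmeas hconst_le
      · rw [setIntegral_const] at hb
        calc (1/(2*(M:ℝ)))^k * (volume B).toReal = (volume B).toReal • (1/(2*(M:ℝ)))^k := by
              rw [smul_eq_mul]; ring
          _ ≤ ∫ t in B, f t := hb
      · rw [hB, Real.volume_Icc_pi]
        exact (ENNReal.prod_lt_top fun i _ => ENNReal.ofReal_lt_top).ne
    have hstep2 : ∫ t in B, f t ≤ ∫ t in T, f t := by
      apply setIntegral_mono_set hfint
      · rw [Filter.EventuallyLE, ae_restrict_iff' hTclosed.measurableSet]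
        filter_upwards with t ht
        exact pow_nonneg (ht.1 _) k
      · exact HasSubset.Subset.eventuallyLE hBsub
    linarith
  calc ∫ t in T, (t ⟨0, by omega⟩) ^ k * Ddef M δ (simplexEmb M t)
      ≤ ∫ t in T, K * (t ⟨0, by omega⟩) ^ k := hmono
    _ = K * ∫ t in T, (t ⟨0, by omega⟩) ^ k := hconstmul
    _ < 0 := mul_neg_of_neg_of_pos hKneg hIpos
end
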